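/- arXiv:2207.06484 — 5 statements merged into one kernel-verified Lean document; each statement's English description precedes it below -/
import Mathlib

section
/- Let W be a compact subset of ℝ^d whose atomic norm ‖v‖_W is defined as inf{∑|c_i| : v = ∑ c_i w_i, w_i ∈ W}. For a linear map A : ℝ^d → ℝ^m, the following are equivalent: (1) for every z in the kernel of A with z ≠ 0 and every v that is a linear combination of at most s atoms of W, ‖v‖_W < ‖z − v‖_W; (2) for every z₀ that is a linear combination of at most s atoms of W, z₀ is the unique minimizer of ‖z‖_W over {z : A z = A z₀}. -/
open scoped BigOperators

/-- The atomic norm associated with an atomic set `W`. -/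
noncomputable def atomicNorm {V : Type*} [AddCommGroup V] [Module ℝ V] (W : Set V) (v : V) : ℝ :=
  sInf {r : ℝ | ∃ (n : ℕ) (c : Fin n → ℝ) (w : Fin n → V),
    (∀ i, w i ∈ W) ∧ v = ∑ i, c i • w i ∧ r = ∑ i, |c i|}

/-- `Σ_{W,s}`: vectors that are linear combinations of at most `s` atoms of `W`. -/
def sparseSpan {V : Type*} [AddCommGroup V] [Module ℝ V] (W : Set V) (s : ℕ) : Set V :=
  {z | ∃ (c : Fin s → ℝ) (w : Fin s → V), (∀ i, w i ∈ W) ∧ z = ∑ i, c i • w i}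

lemma atomicNorm_neg {V : Type*} [AddCommGroup V] [Module ℝ V] (W : Set V) (v : V) :
    atomicNorm W (-v) = atomicNorm W v := by
  unfold atomicNorm
  congr 1
  ext r
  constructor
  · rintro ⟨n, c, w, hw, hv, hr⟩
    exact ⟨n, fun i => -c i, w, hw, by
      rw [neg_eq_iff_eq_neg] at hv
      simpa [neg_smul, ← Finset.sum_neg_distrib] using hv, by simpa using hr⟩
  · rintro ⟨n, c, w, hw, hv, hr⟩
    exact ⟨n, fun i => -c i, w, hw, by
      simp [neg_smul, ← Finset.sum_neg_distrib, hv], by simpa using hr⟩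

theorem stmt0 {d m s : ℕ} (W : Set (EuclideanSpace ℝ (Fin d))) (hW : IsCompact W)
    (A : EuclideanSpace ℝ (Fin d) →ₗ[ℝ] EuclideanSpace ℝ (Fin m)) :
    (∀ z ∈ LinearMap.ker A, z ≠ 0 → ∀ v ∈ sparseSpan W s,
        atomicNorm W v < atomicNorm W (z - v))
    ↔
    (∀ z₀ ∈ sparseSpan W s, ∀ z : EuclideanSpace ℝ (Fin d),
        A z = A z₀ → z ≠ z₀ → atomicNorm W z₀ < atomicNorm W z) := by
  constructor
  · intro h z₀ hz₀ z hAz hne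
    have hker : z₀ - z ∈ LinearMap.ker A := by
      simp [LinearMap.mem_ker, map_sub, hAz]
    have hne' : z₀ - z ≠ 0 := sub_ne_zero.mpr (Ne.symm hne)
    have := h (z₀ - z) hker hne' z₀ hz₀
    have hzz : z₀ - z - z₀ = -z := by abel
    rwa [hzz, atomicNorm_neg] at this
  · intro h z hz hne v hv
    have hA : A (v - z) = A v := by
      simp only [map_sub]
      rw [LinearMap.mem_ker.mp hz]
      simp
    have hne' : v - z ≠ v := by
      intro hcontra
      apply hne
      have := sub_eq_self.mp hcontra
      exact this
    have := h v hv (v - z) hA hne'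
    have hzz : v - z = -(z - v) := by abel
    rwa [hzz, atomicNorm_neg] at this
end

section
/- Let F = [f₁,…,f_N] ∈ ℝ^{d×N} be a matrix whose columns form a frame, and suppose F satisfies the null space property of order s: for every nonzero x in ker F and every index set T with |T| ≤ s, ‖x_T‖₁ < ‖x_{T^c}‖₁. Then the atomic set {f₁,…,f_N} is s-even: for any index set J with |J| ≤ s and any signs c_j ∈ {−1, 1}, the atomic norm of z = ∑_{j∈J} c_j f_j equals |J|. -/
open scoped BigOperators

/-- The atomic norm of `z` with respect to the columns of `F`:
`‖z‖_F = min {‖c‖₁ : F c = z}`. -/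
noncomputable def frameNorm {d N : ℕ} (F : Matrix (Fin d) (Fin N) ℝ) (z : Fin d → ℝ) : ℝ :=
  sInf {r : ℝ | ∃ c : Fin N → ℝ, F.mulVec c = z ∧ r = ∑ i, |c i|}
theorem stmt11 {d N s : ℕ} (F : Matrix (Fin d) (Fin N) ℝ)
    (hframe : Function.Surjective F.mulVec)
    (hNSP : ∀ x : Fin N → ℝ, F.mulVec x = 0 → x ≠ 0 →
      ∀ T : Finset (Fin N), T.card ≤ s →
        (∑ i ∈ T, |x i|) < ∑ i ∈ Tᶜ, |x i|) :
    ∀ J : Finset (Fin N), J.card ≤ s →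
      ∀ c : Fin N → ℝ, (∀ j ∈ J, |c j| = 1) →
        frameNorm F (F.mulVec (fun j => if j ∈ J then c j else 0)) = J.card := by
  intro J hJ c hc
  set c0 : Fin N → ℝ := fun j => if j ∈ J then c j else 0 with hc0
  have hsum0 : ∑ i, |c0 i| = (J.card : ℝ) := by
    have h1 : ∑ i, |c0 i| = ∑ i ∈ J, |c0 i| :=
      (Finset.sum_subset (Finset.subset_univ J) (by intro i _ hi; simp [hc0, hi])).symm
    have h2 : ∑ i ∈ J, |c0 i| = ∑ i ∈ J, (1 : ℝ) :=
      Finset.sum_congr rfl (fun i hi => by simp [hc0, hi, hc i hi])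
    rw [h1, h2]; simp
  -- lower bound for every element of the set
  have hlb : ∀ r ∈ {r : ℝ | ∃ c' : Fin N → ℝ, F.mulVec c' = F.mulVec c0 ∧ r = ∑ i, |c' i|},
      (J.card : ℝ) ≤ r := by
    rintro r ⟨c', hFc', rfl⟩
    by_cases hx : c' = c0
    · rw [hx, hsum0]
    · set x : Fin N → ℝ := c' - c0 with hxdef
      have hFx : F.mulVec x = 0 := by
        rw [hxdef, Matrix.mulVec_sub, hFc', sub_self]
      have hxne : x ≠ 0 := by
        intro h
        exact hx (by rw [← sub_eq_zero]; exact h)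
      have hnsp := hNSP x hFx hxne J hJ
      have hsplit : ∑ i, |c' i| = (∑ i ∈ J, |c' i|) + ∑ i ∈ Jᶜ, |c' i| :=
        (Finset.sum_add_sum_compl J _).symm
      have h1 : ∀ i ∈ J, (1 : ℝ) - |x i| ≤ |c' i| := by
        intro i hi
        have : c' i = c0 i + x i := by simp [hxdef]
        rw [this]
        have hc0i : |c0 i| = 1 := by simp [hc0, hi, hc i hi]
        calc (1 : ℝ) - |x i| = |c0 i| - |x i| := by rw [hc0i]
          _ ≤ |c0 i + x i| := by
              have := abs_sub_abs_le_abs_sub (c0 i) (-(x i))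
              simpa [sub_neg_eq_add, abs_neg] using this
      have h2 : ∀ i ∈ Jᶜ, |c' i| = |x i| := by
        intro i hi
        have hi' : i ∉ J := Finset.mem_compl.mp hi
        simp [hxdef, hc0, hi']
      have hJbound : (J.card : ℝ) - (∑ i ∈ J, |x i|) ≤ ∑ i ∈ J, |c' i| := by
        have := Finset.sum_le_sum h1
        simpa [Finset.sum_sub_distrib] using this
      rw [hsplit, Finset.sum_congr rfl h2]
      have : (∑ i ∈ J, |x i|) ≤ ∑ i ∈ Jᶜ, |x i| := le_of_lt hnsp
      linarith
  have hmem : (J.card : ℝ) ∈ {r : ℝ | ∃ c' : Fin N → ℝ, F.mulVec c' = F.mulVec c0 ∧ r = ∑ i, |c' i|} :=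
    ⟨c0, rfl, hsum0.symm⟩
  unfold frameNorm
  exact le_antisymm (csInf_le ⟨_, hlb⟩ hmem) (le_csInf ⟨_, hmem⟩ hlb)
end

section
/- For a frame matrix F ∈ ℝ^{d×N} and linear map A ∈ ℝ^{m×d}, the strong F null space property [∃ c > 0 such that ‖z − v‖_F − ‖v‖_F ≥ c‖z‖₂ for every z ∈ ker A and every v ∈ Σ_{F,s}] is equivalent to: ∃ c > 0 such that for every x ∈ ker(AF) and every index set T with |T| ≤ s, there exists u ∈ ker F with ‖x_{T^c}‖₁ − ‖x_T + u‖₁ ≥ c‖F x‖₂. -/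
open scoped BigOperators

/-- The Euclidean (ℓ²) norm on `ℝ^n`. -/
noncomputable def l2 {n : ℕ} (z : Fin n → ℝ) : ℝ := Real.sqrt (∑ i, z i ^ 2)
/-- `Σ_{F,s}`: vectors expressible using at most `s` columns of `F`. -/
def frameSparse {d N : ℕ} (F : Matrix (Fin d) (Fin N) ℝ) (s : ℕ) : Set (Fin d → ℝ) :=
  {v | ∃ u : Fin N → ℝ, (∃ T : Finset (Fin N), T.card ≤ s ∧ ∀ i ∉ T, u i = 0) ∧
    v = F.mulVec u}

namespace Stmt16Aux

lemma frameSet_bdd {d N : ℕ} (F : Matrix (Fin d) (Fin N) ℝ) (z : Fin d → ℝ) :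
    BddBelow {r : ℝ | ∃ c : Fin N → ℝ, F.mulVec c = z ∧ r = ∑ i, |c i|} := by
  refine ⟨0, ?_⟩
  rintro r ⟨c, -, rfl⟩
  exact Finset.sum_nonneg fun i _ => abs_nonneg _

lemma frameNorm_le {d N : ℕ} (F : Matrix (Fin d) (Fin N) ℝ) {z : Fin d → ℝ} {c : Fin N → ℝ}
    (h : F.mulVec c = z) : frameNorm F z ≤ ∑ i, |c i| :=
  csInf_le (frameSet_bdd F z) ⟨c, h, rfl⟩

lemma l2_pos {n : ℕ} {z : Fin n → ℝ} (h : z ≠ 0) : 0 < l2 z := by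
  apply Real.sqrt_pos.2
  obtain ⟨i, hi⟩ := Function.ne_iff.1 h
  refine Finset.sum_pos' (fun j _ => sq_nonneg _) ⟨i, Finset.mem_univ _, ?_⟩
  exact pow_pos (abs_pos.2 hi) 2 |>.trans_le (by rw [sq_abs])

end Stmt16Aux

open Stmt16Aux in
theorem stmt16 {d N m s : ℕ} (F : Matrix (Fin d) (Fin N) ℝ) (A : Matrix (Fin m) (Fin d) ℝ)
    (hspan : Function.Surjective F.mulVec) :
    (∃ c : ℝ, 0 < c ∧ ∀ z : Fin d → ℝ, A.mulVec z = 0 →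
        ∀ v ∈ frameSparse F s, frameNorm F (z - v) - frameNorm F v ≥ c * l2 z)
    ↔
    (∃ c : ℝ, 0 < c ∧ ∀ x : Fin N → ℝ, A.mulVec (F.mulVec x) = 0 →
        ∀ T : Finset (Fin N), T.card ≤ s →
          ∃ u : Fin N → ℝ, F.mulVec u = 0 ∧
            (∑ i ∈ Tᶜ, |x i|) - (∑ i, |(if i ∈ T then x i else 0) + u i|)
              ≥ c * l2 (F.mulVec x)) := by
  constructor
  · rintro ⟨c, hc, H⟩
    refine ⟨c / 2, by positivity, ?_⟩
    intro x hx T hT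
    by_cases hz : F.mulVec x = 0
    · refine ⟨-x, by rw [Matrix.mulVec_neg, hz, neg_zero], ?_⟩
      have h1 : ∀ i, |(if i ∈ T then x i else 0) + (-x) i| = if i ∈ T then 0 else |x i| := by
        intro i; by_cases h : i ∈ T <;> simp [h, abs_neg]
      have h2 : ∑ i, (if i ∈ T then (0:ℝ) else |x i|) = ∑ i ∈ Tᶜ, |x i| := by
        calc ∑ i, (if i ∈ T then (0:ℝ) else |x i|)
            = ∑ i, (if i ∈ Tᶜ then |x i| else 0) := by
              refine Finset.sum_congr rfl fun i _ => ?_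
              by_cases h : i ∈ T <;> simp [h]
          _ = ∑ i ∈ Finset.univ ∩ Tᶜ, |x i| := Finset.sum_ite_mem _ _ _
          _ = ∑ i ∈ Tᶜ, |x i| := by rw [Finset.univ_inter]
      simp only [h1, h2, hz]
      have : l2 (0 : Fin d → ℝ) = 0 := by simp [l2]
      rw [this]
      simp
    · set z := F.mulVec x with hzdef
      set xT : Fin N → ℝ := fun i => if i ∈ T then x i else 0 with hxT
      have hv : F.mulVec xT ∈ frameSparse F s :=
        ⟨xT, ⟨T, hT, fun i hi => by simp [hxT, hi]⟩, rfl⟩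
      have hmain := H z hx _ hv
      have hsub : F.mulVec (x - xT) = z - F.mulVec xT := by rw [Matrix.mulVec_sub]
      have h1 : frameNorm F (z - F.mulVec xT) ≤ ∑ i ∈ Tᶜ, |x i| := by
        refine (frameNorm_le F hsub).trans_eq ?_
        calc ∑ i, |(x - xT) i|
            = ∑ i, (if i ∈ Tᶜ then |x i| else 0) := by
              refine Finset.sum_congr rfl fun i _ => ?_
              by_cases h : i ∈ T <;> simp [hxT, h]
          _ = ∑ i ∈ Finset.univ ∩ Tᶜ, |x i| := Finset.sum_ite_mem _ _ _
          _ = ∑ i ∈ Tᶜ, |x i| := by rw [Finset.univ_inter]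
      have hlz : 0 < l2 z := l2_pos hz
      have h2 : frameNorm F (F.mulVec xT) < (∑ i ∈ Tᶜ, |x i|) - c / 2 * l2 z := by
        nlinarith [hmain]
      obtain ⟨r, hrmem, hr⟩ :=
        exists_lt_of_csInf_lt (s := {r : ℝ | ∃ c : Fin N → ℝ, F.mulVec c = F.mulVec xT ∧ r = ∑ i, |c i|})
          ⟨∑ i, |xT i|, xT, rfl, rfl⟩ h2
      obtain ⟨c', hc', rfl⟩ := hrmem
      refine ⟨c' - xT, by rw [Matrix.mulVec_sub, hc', sub_self], ?_⟩
      have heq : ∀ i, (if i ∈ T then x i else 0) + (c' - xT) i = c' i := by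
        intro i; simp [hxT]
      simp only [heq]
      linarith
  · rintro ⟨c, hc, H⟩
    refine ⟨c, hc, ?_⟩
    intro z hz v hv
    obtain ⟨u₀, ⟨T, hT, hsupp⟩, rfl⟩ := hv
    set v := F.mulVec u₀ with hvdef
    have key : frameNorm F v + c * l2 z ≤ frameNorm F (z - v) := by
      obtain ⟨w₀, hw₀⟩ := hspan (z - v)
      refine le_csInf ⟨∑ i, |w₀ i|, w₀, hw₀, rfl⟩ ?_
      rintro r ⟨w, hw, rfl⟩
      set x := w + u₀ with hxdef
      have hFx : F.mulVec x = z := by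
        rw [hxdef, Matrix.mulVec_add, hw, ← hvdef, sub_add_cancel]
      have hAFx : A.mulVec (F.mulVec x) = 0 := by rw [hFx]; exact hz
      obtain ⟨u, hu, hineq⟩ := H x hAFx T hT
      rw [hFx] at hineq
      have hfv : frameNorm F v ≤ ∑ i, |u₀ i + u i| := by
        refine frameNorm_le F ?_
        have : (fun i => u₀ i + u i) = u₀ + u := rfl
        rw [this, Matrix.mulVec_add, hu, add_zero]
      have hpt : ∀ i, |u₀ i + u i| ≤ |(if i ∈ T then x i else 0) + u i|
          + (if i ∈ T then |w i| else 0) := by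
        intro i
        by_cases h : i ∈ T
        · simp only [h, if_true, hxdef, Pi.add_apply]
          have e : u₀ i + u i = (w i + u₀ i + u i) - w i := by ring
          rw [e]
          exact abs_sub _ _
        · simp [h, hsupp i h]
      have hsum : ∑ i, |u₀ i + u i| ≤ (∑ i, |(if i ∈ T then x i else 0) + u i|)
          + ∑ i ∈ T, |w i| := by
        calc ∑ i, |u₀ i + u i|
            ≤ ∑ i, (|(if i ∈ T then x i else 0) + u i| + (if i ∈ T then |w i| else 0)) :=
              Finset.sum_le_sum fun i _ => hpt i
          _ = (∑ i, |(if i ∈ T then x i else 0) + u i|) + ∑ i, (if i ∈ T then |w i| else 0) :=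
              Finset.sum_add_distrib
          _ = _ := by rw [Finset.sum_ite_mem Finset.univ T, Finset.univ_inter]
      have hxw : ∑ i ∈ Tᶜ, |x i| = ∑ i ∈ Tᶜ, |w i| := by
        refine Finset.sum_congr rfl fun i hi => ?_
        rw [hxdef]
        simp [hsupp i (Finset.mem_compl.1 hi)]
      have hwsplit : ∑ i, |w i| = (∑ i ∈ T, |w i|) + ∑ i ∈ Tᶜ, |w i| :=
        (Finset.sum_add_sum_compl T _).symm
      rw [hwsplit]
      have := hineq
      rw [hxw] at this
      linarith
    linarith [key]
end

section
/- Let W = {w₁,…,w_N} ⊂ ℝ^d be s-even, meaning ‖∑_{j∈J} c_j w_j‖_W = |J| for every index set |J| ≤ s and signs |c_j| = 1, where ‖·‖_W is the atomic norm. If every z₀ ∈ Σ_{W,s} is exactly recovered as the unique minimizer of min ‖z‖_W subject to A z = A z₀ for a linear map A : ℝ^d → ℝ^m, then m ≥ (1/(8 ln 3)) s ln(N/(2s)) (for s > 2). -/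
open scoped BigOperators

open MeasureTheory Metric Set Pointwise
open scoped ENNReal NNReal


lemma coord_le_norm {n : ℕ} (x : EuclideanSpace ℝ (Fin n)) (i : Fin n) : |x i| ≤ ‖x‖ := by
  rw [EuclideanSpace.norm_eq]
  have h1 : |x i| = Real.sqrt (|x i|^2) := by
    rw [Real.sqrt_sq_eq_abs, abs_abs]
  rw [h1]
  apply Real.sqrt_le_sqrt
  have : |x i|^2 = ‖x i‖^2 := by rw [Real.norm_eq_abs]
  rw [this]
  exact Finset.single_le_sum (f := fun j => ‖x j‖^2) (fun j _ => sq_nonneg _) (Finset.mem_univ i)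

lemma p_sum_le {n : ℕ} {p : EuclideanSpace ℝ (Fin n) → ℝ}
    (hadd : ∀ x y, p (x + y) ≤ p x + p y) (h0 : p 0 = 0)
    {ι : Type*} (s : Finset ι) (f : ι → EuclideanSpace ℝ (Fin n)) :
    p (∑ i ∈ s, f i) ≤ ∑ i ∈ s, p (f i) := by
  classical
  induction s using Finset.induction with
  | empty => simp [h0]
  | @insert a s' hx ih =>
    rw [Finset.sum_insert hx, Finset.sum_insert hx]
    exact le_trans (hadd _ _) (by linarith)

lemma packing_lemma {n : ℕ} (p : EuclideanSpace ℝ (Fin n) → ℝ)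
    (hadd : ∀ x y, p (x + y) ≤ p x + p y)
    (hsmul : ∀ (c : ℝ) x, p (c • x) = |c| * p x)
    {α : ℝ} (hα : 0 < α) (hlow : ∀ x, α * ‖x‖ ≤ p x)
    (S : Finset (EuclideanSpace ℝ (Fin n))) {R r : ℝ} (hr : 0 < r) (hR : 0 ≤ R)
    (hbound : ∀ x ∈ S, p x ≤ R)
    (hsep : ∀ x ∈ S, ∀ y ∈ S, x ≠ y → r < p (x - y)) :
    (S.card : ℝ) ≤ ((2 * R + r) / r) ^ n := by
  have h0 : p 0 = 0 := by simpa using hsmul 0 0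
  have hpos : ∀ x, 0 ≤ p x := fun x => le_trans (by positivity) (hlow x)
  -- upper bound constant
  set C : ℝ := ∑ i : Fin n, p (EuclideanSpace.single i (1:ℝ)) with hC
  have hCpos : 0 ≤ C := Finset.sum_nonneg fun i _ => hpos _
  have hup : ∀ x, p x ≤ C * ‖x‖ := by
    intro x
    have hx : x = ∑ i, x i • EuclideanSpace.single i (1:ℝ) := by
      ext j
      have : (∑ i : Fin n, x i • EuclideanSpace.single i (1:ℝ)) j
          = ∑ i : Fin n, x i • (EuclideanSpace.single i (1:ℝ)) j :=
        by rw [WithLp.ofLp_sum, Finset.sum_apply] <;> rfl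
      rw [this]; simp [EuclideanSpace.single_apply]
    calc p x = p (∑ i, x i • EuclideanSpace.single i (1:ℝ)) := by rw [← hx]
    _ ≤ ∑ i, p (x i • EuclideanSpace.single i (1:ℝ)) := p_sum_le hadd h0 _ _
    _ = ∑ i, |x i| * p (EuclideanSpace.single i (1:ℝ)) := by simp [hsmul]
    _ ≤ ∑ i, ‖x‖ * p (EuclideanSpace.single i (1:ℝ)) := by
        apply Finset.sum_le_sum
        intro i _
        exact mul_le_mul_of_nonneg_right (coord_le_norm x i) (hpos _)
    _ = C * ‖x‖ := by rw [← Finset.mul_sum, mul_comm]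
  -- continuity
  have hcont : Continuous p := by
    have : LipschitzWith (Real.toNNReal C) p := by
      apply LipschitzWith.of_dist_le_mul
      intro x y
      have h1 : p x ≤ p (x - y) + p y := by
        have := hadd (x - y) y; simpa using this
      have h2 : p y ≤ p (y - x) + p x := by
        have := hadd (y - x) x; simpa using this
      have hxy : p (x - y) = p (y - x) := by
        have : y - x = (-1 : ℝ) • (x - y) := by module
        rw [this, hsmul]; simp
      have : |p x - p y| ≤ p (x - y) := abs_sub_le_iff.2 ⟨by linarith, by linarith [hxy]⟩
      calc dist (p x) (p y) = |p x - p y| := Real.dist_eq _ _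
      _ ≤ p (x - y) := this
      _ ≤ C * ‖x - y‖ := hup _
      _ ≤ (Real.toNNReal C) * dist x y := by
          rw [dist_eq_norm]
          exact mul_le_mul_of_nonneg_right (Real.le_coe_toNNReal C) (norm_nonneg _)
    exact this.continuous

  -- unit ball of p
  set K : Set (EuclideanSpace ℝ (Fin n)) := {x | p x ≤ 1} with hKdef
  have hKc : ∀ c : ℝ, 0 < c → {x | p x ≤ c} = c • K := by
    intro c hc
    ext z
    constructor
    · intro hz
      refine ⟨c⁻¹ • z, ?_, by simp [smul_smul, mul_inv_cancel₀ hc.ne']⟩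
      simp only [hKdef, mem_setOf_eq, hsmul, abs_of_pos (inv_pos.2 hc)]
      rw [inv_mul_le_iff₀ hc, mul_one]
      exact hz
    · rintro ⟨k, hk, rfl⟩
      simp only [mem_setOf_eq, hsmul, abs_of_pos hc]
      calc c * p k ≤ c * 1 := by
            exact mul_le_mul_of_nonneg_left hk hc.le
      _ = c := mul_one c
  have hclosed : ∀ c : ℝ, IsClosed {x | p x ≤ c} := fun c =>
    isClosed_le hcont continuous_const
  have hfr : Module.finrank ℝ (EuclideanSpace ℝ (Fin n)) = n := finrank_euclideanSpace_fin
  have hμc : ∀ c : ℝ, 0 < c →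
      volume {x | p x ≤ c} = ENNReal.ofReal (c ^ n) * volume K := by
    intro c hc
    rw [hKc c hc, Measure.addHaar_smul_of_nonneg volume hc.le, hfr]
  -- the small balls
  set B : EuclideanSpace ℝ (Fin n) → Set (EuclideanSpace ℝ (Fin n)) :=
    fun x => {z | p (z - x) ≤ r / 2} with hBdef
  have hBclosed : ∀ x, IsClosed (B x) := by
    intro x
    have : B x = (fun z => z - x) ⁻¹' {y | p y ≤ r / 2} := rfl
    rw [this]
    exact (hclosed _).preimage (continuous_id.sub continuous_const)
  have hBμ : ∀ x, volume (B x) = ENNReal.ofReal ((r/2) ^ n) * volume K := by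
    intro x
    have : B x = x +ᵥ {y | p y ≤ r / 2} := by
      ext z
      constructor
      · intro hz
        refine ⟨z - x, hz, ?_⟩
        simp only [vadd_eq_add]
        abel
      · rintro ⟨y, hy, rfl⟩
        simpa [hBdef] using hy
    rw [this, measure_vadd, hμc _ (by linarith)]
  have hpneg : ∀ x, p (-x) = p x := by
    intro x
    have : (-x) = (-1 : ℝ) • x := by module
    rw [this, hsmul]; simp
  have hdisj : (S : Set (EuclideanSpace ℝ (Fin n))).PairwiseDisjoint B := by
    intro x hx y hy hxy
    refine Set.disjoint_left.2 fun z hzx hzy => ?_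
    have h1 : p (z - x) ≤ r / 2 := hzx
    have h2 : p (z - y) ≤ r / 2 := hzy
    have h3 : p (x - y) ≤ p (x - z) + p (z - y) := by
      have := hadd (x - z) (z - y); simpa using this
    have h4 : p (x - z) = p (z - x) := by
      rw [show x - z = -(z-x) by abel, hpneg]
    have := hsep x (by exact_mod_cast hx) y (by exact_mod_cast hy) hxy
    rw [h4] at h3
    linarith
  have hunion : (⋃ x ∈ S, B x) ⊆ {z | p z ≤ R + r / 2} := by
    intro z hz
    simp only [Set.mem_iUnion] at hz
    obtain ⟨x, hx, hzx⟩ := hz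
    have h1 : p (z - x) ≤ r / 2 := hzx
    have h2 : p z ≤ p (z - x) + p x := by
      have := hadd (z - x) x; simpa using this
    have := hbound x hx
    simp only [mem_setOf_eq]
    linarith
  have hKfin : volume K < ⊤ := by
    have hsub : K ⊆ Metric.closedBall 0 (1/α) := by
      intro x hx
      have h1 : α * ‖x‖ ≤ 1 := le_trans (hlow x) hx
      simp only [Metric.mem_closedBall, dist_zero_right]
      rw [le_div_iff₀ hα, mul_comm]
      exact h1
    exact lt_of_le_of_lt (measure_mono hsub) (measure_closedBall_lt_top)
  have hKpos : 0 < volume K := by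
    have hsub : Metric.ball 0 (1/(C+1)) ⊆ K := by
      intro x hx
      simp only [Metric.mem_ball, dist_zero_right] at hx
      have h1 : p x ≤ C * ‖x‖ := hup x
      have h2 : C * ‖x‖ ≤ C * (1/(C+1)) := by
        apply mul_le_mul_of_nonneg_left (le_of_lt hx) hCpos
      have h3 : C * (1/(C+1)) ≤ 1 := by
        rw [mul_one_div, div_le_one (by linarith)]
        linarith
      exact le_trans h1 (le_trans h2 h3)
    exact lt_of_lt_of_le (measure_ball_pos volume 0 (by positivity)) (measure_mono hsub)
  -- measure counting
  have hcount : (S.card : ℝ≥0∞) * (ENNReal.ofReal ((r/2) ^ n) * volume K)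
      ≤ ENNReal.ofReal ((R + r/2) ^ n) * volume K := by
    calc (S.card : ℝ≥0∞) * (ENNReal.ofReal ((r/2) ^ n) * volume K)
        = ∑ x ∈ S, volume (B x) := by
          simp only [hBμ, Finset.sum_const, nsmul_eq_mul]
    _ = volume (⋃ x ∈ S, B x) :=
          (measure_biUnion_finset hdisj (fun x _ => (hBclosed x).measurableSet)).symm
    _ ≤ volume {z | p z ≤ R + r / 2} := measure_mono hunion
    _ = ENNReal.ofReal ((R + r/2) ^ n) * volume K := hμc _ (by linarith)
  have hcount2 : (S.card : ℝ≥0∞) * ENNReal.ofReal ((r/2) ^ n)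
      ≤ ENNReal.ofReal ((R + r/2) ^ n) := by
    rw [← mul_assoc] at hcount
    exact (ENNReal.mul_le_mul_iff_left hKpos.ne' hKfin.ne).1 hcount
  have hreal : (S.card : ℝ) * ((r/2) ^ n) ≤ (R + r/2) ^ n := by
    have h1 : ENNReal.ofReal ((S.card : ℝ) * ((r/2) ^ n)) ≤ ENNReal.ofReal ((R + r/2) ^ n) := by
      rw [ENNReal.ofReal_mul (by positivity)]
      rw [ENNReal.ofReal_natCast]
      exact hcount2
    exact (ENNReal.ofReal_le_ofReal_iff (by positivity)).1 h1
  have hrn : (0:ℝ) < (r/2) ^ n := by positivity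
  have hfin : ((2 * R + r) / r) ^ n = (R + r/2) ^ n / (r/2) ^ n := by
    rw [← div_pow]
    congr 1
    field_simp
  rw [hfin, le_div_iff₀ hrn]
  exact hreal




section helpers
variable {V : Type*} [AddCommGroup V] [Module ℝ V]

lemma atomicNorm_bddBelow (W : Set V) (v : V) :
    ∀ r ∈ {r : ℝ | ∃ (n : ℕ) (c : Fin n → ℝ) (w : Fin n → V),
      (∀ i, w i ∈ W) ∧ v = ∑ i, c i • w i ∧ r = ∑ i, |c i|}, 0 ≤ r := by
  rintro r ⟨n, c, w, _, _, rfl⟩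
  exact Finset.sum_nonneg fun i _ => abs_nonneg _

lemma atomicNorm_nonneg (W : Set V) (v : V) : 0 ≤ atomicNorm W v :=
  Real.sInf_nonneg (atomicNorm_bddBelow W v)

lemma atomicNorm_le {W : Set V} {v : V} {n : ℕ} {c : Fin n → ℝ} {w : Fin n → V}
    (hw : ∀ i, w i ∈ W) (hv : v = ∑ i, c i • w i) : atomicNorm W v ≤ ∑ i, |c i| :=
  csInf_le ⟨0, fun r hr => atomicNorm_bddBelow W v r hr⟩ ⟨n, c, w, hw, hv, rfl⟩

/-- convert a `Finset`-indexed combination into a `Fin`-indexed one -/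
lemma finset_rep {N : ℕ} (w : Fin N → V) (J : Finset (Fin N)) (c : Fin N → ℝ) :
    ∃ (k : ℕ) (c' : Fin k → ℝ) (w' : Fin k → V), (∀ i, w' i ∈ Set.range w) ∧
      (∑ j ∈ J, c j • w j) = ∑ i, c' i • w' i ∧ (∑ j ∈ J, |c j|) = ∑ i, |c' i| := by
  refine ⟨J.card, fun i => c (J.equivFin.symm i), fun i => w (J.equivFin.symm i),
    fun i => ⟨_, rfl⟩, ?_, ?_⟩
  · rw [← Finset.sum_coe_sort J (fun j => c j • w j)]
    exact Fintype.sum_equiv J.equivFin _ _ (fun x => by simp)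
  · rw [← Finset.sum_coe_sort J (fun j => |c j|)]
    exact Fintype.sum_equiv J.equivFin _ _ (fun x => by simp)

lemma atomicNorm_le_finset {N : ℕ} {w : Fin N → V} (J : Finset (Fin N)) (c : Fin N → ℝ) :
    atomicNorm (Set.range w) (∑ j ∈ J, c j • w j) ≤ ∑ j ∈ J, |c j| := by
  obtain ⟨k, c', w', hw', h1, h2⟩ := finset_rep w J c
  rw [h2]
  exact atomicNorm_le hw' h1

lemma finset_mem_sparseSpan {N s : ℕ} (w : Fin N → V) (J : Finset (Fin N)) (c : Fin N → ℝ)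
    (hJ : J.card ≤ s) (hne : J.Nonempty) :
    (∑ j ∈ J, c j • w j) ∈ sparseSpan (Set.range w) s := by
  classical
  obtain ⟨j₀, hj₀⟩ := hne
  set g : Fin s → Fin N := fun i => if h : (i : ℕ) < J.card then J.equivFin.symm ⟨i, h⟩ else j₀
    with hg
  set c' : Fin s → ℝ := fun i => if h : (i : ℕ) < J.card then c (J.equivFin.symm ⟨i, h⟩) else 0
    with hc'
  refine ⟨c', fun i => w (g i), fun i => ⟨_, rfl⟩, ?_⟩
  set F : ℕ → V := fun i => (if h : i < J.card then c (J.equivFin.symm ⟨i, h⟩) else 0) •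
      w (if h : i < J.card then (J.equivFin.symm ⟨i, h⟩ : Fin N) else j₀) with hF
  have key : ∑ i : Fin s, c' i • w (g i)
      = ∑ i : Fin J.card, c (J.equivFin.symm i) • w (J.equivFin.symm i) := by
    have e1 : ∑ i : Fin s, c' i • w (g i) = ∑ i ∈ Finset.range s, F i :=
      Fin.sum_univ_eq_sum_range F s
    have e2 : ∑ i ∈ Finset.range J.card, F i = ∑ i ∈ Finset.range s, F i := by
      apply Finset.sum_subset (Finset.range_subset_range.2 hJ)
      intro x _ hx
      rw [Finset.mem_range, not_lt] at hx
      rw [hF]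
      simp only [dif_neg (not_lt.2 hx)]
      exact zero_smul ℝ _
    have e3 : ∑ i ∈ Finset.range J.card, F i
        = ∑ i : Fin J.card, c (J.equivFin.symm i) • w (J.equivFin.symm i) := by
      rw [← Fin.sum_univ_eq_sum_range F J.card]
      apply Finset.sum_congr rfl
      intro i _
      rw [hF]
      simp only [Fin.is_lt, dif_pos, Fin.eta]
    rw [e1, ← e2, e3]
  rw [key, ← Finset.sum_coe_sort J (fun j => c j • w j)]
  exact Fintype.sum_equiv J.equivFin (fun x => c x • w x)
    (fun i => c (J.equivFin.symm i) • w (J.equivFin.symm i))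
    (fun x => by simp only [Equiv.symm_apply_apply])

end helpers

section combinatorics

lemma greedy_select {α : Type*} [DecidableEq α] (rel : α → α → Prop) [DecidableRel rel]
    (hsym : ∀ a b, rel a b → rel b a) (B : ℕ) :
    ∀ T : Finset α, (∀ a ∈ T, rel a a) → (∀ a ∈ T, (T.filter (fun b => rel a b)).card ≤ B) →
      ∃ U : Finset α, U ⊆ T ∧ (∀ a ∈ U, ∀ b ∈ U, a ≠ b → ¬ rel a b) ∧ T.card ≤ U.card * B := by
  classical
  intro T
  induction T using Finset.strongInduction with
  | _ T ih =>
    intro hrefl hB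
    rcases T.eq_empty_or_nonempty with rfl | ⟨a, ha⟩
    · exact ⟨∅, by simp⟩
    · set T' := T.filter (fun b => ¬ rel a b) with hT'
      have haT' : a ∉ T' := by simp [hT', hrefl a ha]
      have hsub : T' ⊂ T :=
        Finset.ssubset_iff_of_subset (Finset.filter_subset _ _) |>.2 ⟨a, ha, haT'⟩
      obtain ⟨U', hU'sub, hU'good, hU'card⟩ := ih T' hsub
        (fun b hb => hrefl b (Finset.mem_of_mem_filter b hb))
        (fun b hb =>
        le_trans (Finset.card_le_card (Finset.filter_subset_filter _ (Finset.filter_subset _ _)))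
          (hB b (Finset.mem_of_mem_filter b hb)))
      have haU' : a ∉ U' := fun h => haT' (hU'sub h)
      refine ⟨insert a U', ?_, ?_, ?_⟩
      · intro x hx
        rcases Finset.mem_insert.1 hx with rfl | hx
        · exact ha
        · exact Finset.filter_subset _ _ (hU'sub hx)
      · intro x hx y hy hxy
        have hmem : ∀ b ∈ U', ¬ rel a b := by
          intro b hb
          have := hU'sub hb
          rw [hT', Finset.mem_filter] at this
          exact this.2
        rcases Finset.mem_insert.1 hx with rfl | hx'
        · rcases Finset.mem_insert.1 hy with rfl | hy'
          · exact absurd rfl hxy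
          · exact hmem y hy'
        · rcases Finset.mem_insert.1 hy with rfl | hy'
          · exact fun hr => hmem x hx' (hsym _ _ hr)
          · exact hU'good x hx' y hy' hxy
      · rw [Finset.card_insert_of_notMem haU']
        have hsplit : (T.filter (fun b => rel a b)).card + T'.card = T.card :=
          Finset.card_filter_add_card_filter_not _
        have h1 : (T.filter (fun b => rel a b)).card ≤ B := hB a ha
        calc T.card = (T.filter (fun b => rel a b)).card + T'.card := hsplit.symm
        _ ≤ B + U'.card * B := by omega
        _ = (U'.card + 1) * B := by ring

lemma bad_count {N t : ℕ} (J : Finset (Fin N)) (hJ : J.card = t) :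
    (((Finset.univ : Finset (Fin N)).powersetCard t).filter
        (fun J' => t ≤ 2 * (J ∩ J').card)).card
      ≤ 2 ^ t * Nat.choose N (t / 2) := by
  classical
  set h : ℕ := (t + 1) / 2 with hh
  set u : ℕ := t / 2 with hu
  set T := ((Finset.univ : Finset (Fin N)).powersetCard t).filter
      (fun J' => t ≤ 2 * (J ∩ J').card) with hT
  -- each bad set contains an h-subset of J∩J'
  have hex : ∀ J' : Finset (Fin N), ∃ K : Finset (Fin N),
      J' ∈ T → K ⊆ J ∩ J' ∧ K.card = h := by
    intro J'
    by_cases hmem : J' ∈ T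
    · rw [hT, Finset.mem_filter] at hmem
      have : h ≤ (J ∩ J').card := by omega
      obtain ⟨K, hK1, hK2⟩ := Finset.exists_subset_card_eq this
      exact ⟨K, fun _ => ⟨hK1, hK2⟩⟩
    · exact ⟨∅, fun hc => absurd hc hmem⟩
  choose K hK using hex
  set P := (J.powersetCard h) ×ˢ ((Finset.univ : Finset (Fin N)).powersetCard u) with hP
  have hinj : ∀ J' ∈ T, ∀ J'' ∈ T,
      (fun J' => (K J', J' \ K J')) J' = (fun J' => (K J', J' \ K J')) J'' → J' = J'' := by
    intro a hA b hB heq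
    simp only [Prod.mk.injEq] at heq
    obtain ⟨h1, h2⟩ := heq
    have hKa := hK a hA
    have hKb := hK b hB
    have ha' : K a ∪ (a \ K a) = a :=
      Finset.union_sdiff_of_subset (hKa.1.trans Finset.inter_subset_right)
    have hb' : K b ∪ (b \ K b) = b :=
      Finset.union_sdiff_of_subset (hKb.1.trans Finset.inter_subset_right)
    rw [← ha', ← hb', h2, h1]
  have hmaps : ∀ J' ∈ T, (K J', J' \ K J') ∈ P := by
    intro J' hJ'
    have hKJ := hK J' hJ'
    rw [hT, Finset.mem_filter, Finset.mem_powersetCard] at hJ'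
    rw [hP, Finset.mem_product, Finset.mem_powersetCard, Finset.mem_powersetCard]
    refine ⟨⟨hKJ.1.trans Finset.inter_subset_left, hKJ.2⟩, Finset.subset_univ _, ?_⟩
    rw [Finset.card_sdiff_of_subset (hKJ.1.trans Finset.inter_subset_right), hKJ.2, hJ'.1.2]
    omega
  have hcard : T.card ≤ P.card := Finset.card_le_card_of_injOn _ hmaps hinj
  have hPcard : P.card = Nat.choose t h * Nat.choose N u := by
    rw [hP, Finset.card_product, Finset.card_powersetCard, Finset.card_powersetCard, hJ,
      Finset.card_univ, Fintype.card_fin]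
  have hch : Nat.choose t h ≤ 2 ^ t := by
    calc Nat.choose t h ≤ ∑ i ∈ Finset.range (t + 1), Nat.choose t i := by
          by_cases hht : h ≤ t
          · exact Finset.single_le_sum (f := fun i => Nat.choose t i)
              (fun i _ => Nat.zero_le _) (Finset.mem_range.2 (by omega))
          · rw [Nat.choose_eq_zero_of_lt (by omega)]; exact Nat.zero_le _
    _ = 2 ^ t := Nat.sum_range_choose t
  calc T.card ≤ Nat.choose t h * Nat.choose N u := hcard.trans_eq hPcard
  _ ≤ 2 ^ t * Nat.choose N u := Nat.mul_le_mul_right _ hch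

lemma choose_ratio {N t : ℕ} (htN : t ≤ N) (ht : 0 < t) :
    ∀ j, j ≤ t - t / 2 →
      (((N : ℝ) - t + 1) / t) ^ j * Nat.choose N (t / 2) ≤ Nat.choose N (t / 2 + j) := by
  have hq : (0:ℝ) ≤ ((N : ℝ) - t + 1) / t := by
    apply div_nonneg _ (by positivity)
    have : (t:ℝ) ≤ N := by exact_mod_cast htN
    linarith
  intro j
  induction j with
  | zero => simp
  | succ j ihj =>
    intro hj
    have hj' : j ≤ t - t / 2 := by omega
    have step : (((N : ℝ) - t + 1) / t) * Nat.choose N (t / 2 + j) ≤ Nat.choose N (t / 2 + j + 1) := by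
      set k := t / 2 + j with hk
      have hkt : k + 1 ≤ t := by omega
      have hnat : (N - t + 1) * Nat.choose N k ≤ t * Nat.choose N (k + 1) := by
        have h1 : (N - t + 1) ≤ N - k := by omega
        have h2 : Nat.choose N (k+1) * (k+1) = Nat.choose N k * (N - k) :=
          Nat.choose_succ_right_eq N k
        calc (N - t + 1) * Nat.choose N k ≤ (N - k) * Nat.choose N k :=
              Nat.mul_le_mul_right _ h1
        _ = Nat.choose N (k+1) * (k+1) := by rw [h2]; ring
        _ ≤ t * Nat.choose N (k+1) := by
              rw [mul_comm]; exact Nat.mul_le_mul_right _ hkt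
      rw [div_mul_eq_mul_div, div_le_iff₀ (by exact_mod_cast ht)]
      have hcast : ((N : ℝ) - t + 1) = ((N - t + 1 : ℕ) : ℝ) := by
        push_cast [Nat.cast_sub htN]
        ring
      rw [hcast]
      calc ((N - t + 1 : ℕ) : ℝ) * Nat.choose N k ≤ ((t * Nat.choose N (k+1) : ℕ) : ℝ) := by
            exact_mod_cast hnat
      _ = Nat.choose N (k + 1) * t := by push_cast; ring
    calc (((N : ℝ) - t + 1) / t) ^ (j+1) * Nat.choose N (t / 2)
        = (((N : ℝ) - t + 1) / t) * ((((N : ℝ) - t + 1) / t) ^ j * Nat.choose N (t / 2)) := by ring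
    _ ≤ (((N : ℝ) - t + 1) / t) * Nat.choose N (t / 2 + j) := by
          exact mul_le_mul_of_nonneg_left (ihj hj') hq
    _ ≤ Nat.choose N (t / 2 + j + 1) := step
    _ = Nat.choose N (t / 2 + (j + 1)) := by ring_nf

end combinatorics

lemma m_ge_s {d m N s : ℕ} (hsN : s ≤ N)
    (w : Fin N → EuclideanSpace ℝ (Fin d))
    (A : EuclideanSpace ℝ (Fin d) →ₗ[ℝ] EuclideanSpace ℝ (Fin m))
    (heven : ∀ J : Finset (Fin N), J.card ≤ s →
      ∀ c : Fin N → ℝ, (∀ j ∈ J, |c j| = 1) →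
        atomicNorm (Set.range w) (∑ j ∈ J, c j • w j) = J.card)
    (hrec : ∀ z₀ ∈ sparseSpan (Set.range w) s,
      ∀ z : EuclideanSpace ℝ (Fin d), A z = A z₀ → z ≠ z₀ →
        atomicNorm (Set.range w) z₀ < atomicNorm (Set.range w) z) :
    s ≤ m := by
  classical
  set g : Fin s → Fin N := Fin.castLE hsN with hg
  have hginj : Function.Injective g := Fin.castLE_injective hsN
  set J : Finset (Fin N) := Finset.univ.image g with hJdef
  have hJcard : J.card = s := by
    rw [hJdef, Finset.card_image_of_injective _ hginj, Finset.card_univ, Fintype.card_fin]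
  -- linear independence
  have hli : LinearIndependent ℝ (fun i : Fin s => w (g i)) := by
    rw [Fintype.linearIndependent_iff]
    intro a ha
    by_contra hcon
    push_neg at hcon
    obtain ⟨i₀, hi₀⟩ := hcon
    set b : Fin N → ℝ := fun j => if h : ∃ i, g i = j then a h.choose else 0 with hb
    have hbg : ∀ i, b (g i) = a i := by
      intro i
      have hex : ∃ i', g i' = g i := ⟨i, rfl⟩
      rw [hb]
      simp only [dif_pos hex]
      congr 1
      exact hginj hex.choose_spec
    have hbsum : ∑ j ∈ J, b j • w j = 0 := by
      rw [hJdef, Finset.sum_image (fun x _ y _ h => hginj h)]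
      simp_rw [hbg]
      exact ha
    set c : Fin N → ℝ := fun j => if b j = 0 then 1 else if 0 < b j then 1 else -1 with hc
    have hcabs : ∀ j, |c j| = 1 := by
      intro j
      rw [hc]
      by_cases h1 : b j = 0
      · simp [h1]
      · by_cases h2 : 0 < b j <;> simp [h1, h2]
    set B : ℝ := ∑ j ∈ J, |b j| with hB
    have hBpos : 0 < B := by
      have h1 : 0 < |b (g i₀)| := by rw [hbg]; exact abs_pos.2 hi₀
      have h2 : |b (g i₀)| ≤ B := by
        apply Finset.single_le_sum (f := fun j => |b j|) (fun j _ => abs_nonneg _)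
        rw [hJdef]; exact Finset.mem_image_of_mem g (Finset.mem_univ i₀)
      linarith
    have hBnn : 0 ≤ B := hBpos.le
    set τ : ℝ := (1 + B)⁻¹ with hτ
    have hτpos : 0 < τ := by rw [hτ]; positivity
    have hkey : ∀ j ∈ J, |c j - τ * b j| = 1 - τ * |b j| := by
      intro j hj
      have hble : |b j| ≤ B := by
        apply Finset.single_le_sum (f := fun j => |b j|) (fun j _ => abs_nonneg _) hj
      have hτb : τ * |b j| ≤ 1 := by
        rw [hτ]
        rw [inv_mul_le_iff₀ (by linarith)]
        linarith
      rw [hc]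
      by_cases h1 : b j = 0
      · simp [h1]
      · by_cases h2 : 0 < b j
        · simp only [h1, if_false, h2, if_true]
          rw [abs_of_pos h2] at hτb hble ⊢
          rw [abs_of_nonneg]
          nlinarith [hτpos]
        · simp only [h1, if_false, h2, if_false]
          have h3 : b j < 0 := lt_of_le_of_ne (not_lt.1 h2) h1
          rw [abs_of_neg h3] at hτb hble ⊢
          rw [show (-1 : ℝ) - τ * b j = -(1 + τ * b j) by ring, abs_neg, abs_of_nonneg]
          · ring
          · nlinarith [hτpos]
    have hrw : ∑ j ∈ J, c j • w j = ∑ j ∈ J, (c j - τ * b j) • w j := by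
      rw [Finset.sum_congr rfl (fun j _ => sub_smul (c j) (τ * b j) (w j)),
        Finset.sum_sub_distrib]
      have : ∑ j ∈ J, (τ * b j) • w j = τ • ∑ j ∈ J, b j • w j := by
        rw [Finset.smul_sum]
        exact Finset.sum_congr rfl (fun j _ => by rw [smul_smul])
      rw [this, hbsum, smul_zero, sub_zero]
    have hnorm : atomicNorm (Set.range w) (∑ j ∈ J, c j • w j) = s := by
      rw [heven J (le_of_eq hJcard) c (fun j _ => hcabs j), hJcard]
    have hle : atomicNorm (Set.range w) (∑ j ∈ J, c j • w j) ≤ s - τ * B := by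
      rw [hrw]
      calc atomicNorm (Set.range w) (∑ j ∈ J, (c j - τ * b j) • w j)
          ≤ ∑ j ∈ J, |c j - τ * b j| := atomicNorm_le_finset J _
      _ = ∑ j ∈ J, (1 - τ * |b j|) := Finset.sum_congr rfl hkey
      _ = J.card - τ * B := by
          rw [Finset.sum_sub_distrib, Finset.sum_const, hB, Finset.mul_sum]
          simp [nsmul_eq_mul]
      _ = s - τ * B := by rw [hJcard]
    rw [hnorm] at hle
    nlinarith
  -- rank argument
  set U : Submodule ℝ (EuclideanSpace ℝ (Fin d)) :=
    Submodule.span ℝ (Set.range (fun i : Fin s => w (g i))) with hU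
  have hUsparse : ∀ x : EuclideanSpace ℝ (Fin d), x ∈ U → x ∈ sparseSpan (Set.range w) s := by
    intro x hx
    rw [hU, Submodule.mem_span_range_iff_exists_fun ℝ] at hx
    obtain ⟨cf, hcf⟩ := hx
    exact ⟨cf, fun i => w (g i), fun i => ⟨g i, rfl⟩, hcf.symm⟩
  set f : ↥U →ₗ[ℝ] EuclideanSpace ℝ (Fin m) := A.comp U.subtype with hf
  have hfinj : Function.Injective f := by
    intro x y hxy
    by_contra hne
    have hne' : (x : EuclideanSpace ℝ (Fin d)) ≠ y := fun h => hne (Subtype.ext h)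
    have h1 := hrec _ (hUsparse _ x.2) y (by exact hxy.symm) (fun h => hne' h.symm)
    have h2 := hrec _ (hUsparse _ y.2) x (by exact hxy) hne'
    linarith
  have hrank : Module.finrank ℝ ↥U = s := by
    rw [hU, finrank_span_eq_card hli, Fintype.card_fin]
  calc s = Module.finrank ℝ ↥U := hrank.symm
  _ ≤ Module.finrank ℝ (EuclideanSpace ℝ (Fin m)) :=
      LinearMap.finrank_le_finrank_of_injective hfinj
  _ = m := finrank_euclideanSpace_fin

section Qmach
variable {d m N : ℕ} (w : Fin N → EuclideanSpace ℝ (Fin d))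
  (A : EuclideanSpace ℝ (Fin d) →ₗ[ℝ] EuclideanSpace ℝ (Fin m))

/-- representations of `y` through the atoms, mapped by `A` -/
def QSet (y : EuclideanSpace ℝ (Fin m)) : Set ℝ :=
  {r : ℝ | ∃ (n : ℕ) (c : Fin n → ℝ) (ww : Fin n → EuclideanSpace ℝ (Fin d)),
    (∀ i, ww i ∈ Set.range w) ∧ A (∑ i, c i • ww i) = y ∧ r = ∑ i, |c i|}

noncomputable def QF (y : EuclideanSpace ℝ (Fin m)) : ℝ := sInf (QSet w A y)

variable {w A}

lemma QSet_nonneg {y : EuclideanSpace ℝ (Fin m)} : ∀ r ∈ QSet w A y, 0 ≤ r := by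
  rintro r ⟨n, c, ww, _, _, rfl⟩
  exact Finset.sum_nonneg fun i _ => abs_nonneg _

lemma QF_nonneg (y : EuclideanSpace ℝ (Fin m)) : 0 ≤ QF w A y :=
  Real.sInf_nonneg QSet_nonneg

lemma QF_le {y : EuclideanSpace ℝ (Fin m)} {r : ℝ} (hr : r ∈ QSet w A y) : QF w A y ≤ r :=
  csInf_le ⟨0, fun _ h => QSet_nonneg _ h⟩ hr

lemma QSet_add {y₁ y₂ : EuclideanSpace ℝ (Fin m)} {r₁ r₂ : ℝ}
    (h1 : r₁ ∈ QSet w A y₁) (h2 : r₂ ∈ QSet w A y₂) : r₁ + r₂ ∈ QSet w A (y₁ + y₂) := by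
  obtain ⟨n₁, c₁, ww₁, hw1, hA1, hr1⟩ := h1
  obtain ⟨n₂, c₂, ww₂, hw2, hA2, hr2⟩ := h2
  refine ⟨n₁ + n₂, Fin.append c₁ c₂, Fin.append ww₁ ww₂, ?_, ?_, ?_⟩
  · intro i
    refine Fin.addCases (fun i => ?_) (fun i => ?_) i
    · rw [Fin.append_left]; exact hw1 i
    · rw [Fin.append_right]; exact hw2 i
  · rw [Fin.sum_univ_add]
    simp only [Fin.append_left, Fin.append_right]
    rw [map_add, hA1, hA2]
  · rw [hr1, hr2, Fin.sum_univ_add]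
    simp only [Fin.append_left, Fin.append_right]

lemma QSet_smul {y : EuclideanSpace ℝ (Fin m)} {r : ℝ} (c : ℝ)
    (h : r ∈ QSet w A y) : |c| * r ∈ QSet w A (c • y) := by
  obtain ⟨n, cc, ww, hw, hA, hr⟩ := h
  refine ⟨n, fun i => c * cc i, ww, hw, ?_, ?_⟩
  · have : ∑ i, (c * cc i) • ww i = c • ∑ i, cc i • ww i := by
      rw [Finset.smul_sum]
      exact Finset.sum_congr rfl fun i _ => (smul_smul c (cc i) (ww i)).symm
    rw [this, _root_.map_smul, hA]
  · rw [hr, Finset.mul_sum]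
    exact Finset.sum_congr rfl fun i _ => (abs_mul c (cc i)).symm

lemma QF_add {y₁ y₂ : EuclideanSpace ℝ (Fin m)}
    (h1 : (QSet w A y₁).Nonempty) (h2 : (QSet w A y₂).Nonempty) :
    QF w A (y₁ + y₂) ≤ QF w A y₁ + QF w A y₂ := by
  apply le_of_forall_pos_le_add
  intro ε hε
  obtain ⟨r₁, hr₁, hlt₁⟩ := Real.lt_sInf_add_pos h1 (half_pos hε)
  obtain ⟨r₂, hr₂, hlt₂⟩ := Real.lt_sInf_add_pos h2 (half_pos hε)
  have := QF_le (QSet_add hr₁ hr₂)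
  have e1 : sInf (QSet w A y₁) = QF w A y₁ := rfl
  have e2 : sInf (QSet w A y₂) = QF w A y₂ := rfl
  rw [e1] at hlt₁
  rw [e2] at hlt₂
  linarith

lemma QF_smul {y : EuclideanSpace ℝ (Fin m)} (c : ℝ)
    (h : (QSet w A y).Nonempty) : QF w A (c • y) = |c| * QF w A y := by
  rcases eq_or_ne c 0 with rfl | hc
  · simp only [abs_zero, zero_mul, zero_smul]
    apply le_antisymm
    · have h0 : (0:ℝ) ∈ QSet w A (0 : EuclideanSpace ℝ (Fin m)) := by
        refine ⟨0, ![], ![], by simp, by simp, by simp⟩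
      exact QF_le h0
    · exact QF_nonneg _
  · have key : ∀ (c' : ℝ), c' ≠ 0 → ∀ y' : EuclideanSpace ℝ (Fin m), (QSet w A y').Nonempty →
        QF w A (c' • y') ≤ |c'| * QF w A y' := by
      intro c' hc' y' hy'
      apply le_of_forall_pos_le_add
      intro ε hε
      have hcpos : 0 < |c'| := abs_pos.2 hc'
      obtain ⟨r, hr, hlt⟩ := Real.lt_sInf_add_pos hy' (div_pos hε hcpos)
      have := QF_le (QSet_smul c' hr)
      have : QF w A (c' • y') ≤ |c'| * r := this
      calc QF w A (c' • y') ≤ |c'| * r := this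
      _ ≤ |c'| * (QF w A y' + ε / |c'|) := by
          apply mul_le_mul_of_nonneg_left (le_of_lt hlt) hcpos.le
      _ = |c'| * QF w A y' + ε := by
          rw [mul_add, mul_div_cancel₀ _ hcpos.ne']
    have h1 := key c hc y h
    have hcy : (QSet w A (c • y)).Nonempty := by
      obtain ⟨r, hr⟩ := h
      exact ⟨|c| * r, QSet_smul c hr⟩
    have h2 := key c⁻¹ (inv_ne_zero hc) (c • y) hcy
    rw [inv_smul_smul₀ hc, abs_inv] at h2
    have hcpos : 0 < |c| := abs_pos.2 hc
    have h2' : |c| * QF w A y ≤ QF w A (c • y) := by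
      rw [inv_mul_eq_div] at h2
      rw [← le_div_iff₀' hcpos]
      exact h2
    linarith

end Qmach





set_option maxHeartbeats 1000000 in
lemma packing_count {d m N s t : ℕ} (ht1 : 1 ≤ t) (h2t : 2 * t ≤ s)
    (w : Fin N → EuclideanSpace ℝ (Fin d))
    (A : EuclideanSpace ℝ (Fin d) →ₗ[ℝ] EuclideanSpace ℝ (Fin m))
    (heven : ∀ J : Finset (Fin N), J.card ≤ s →
      ∀ c : Fin N → ℝ, (∀ j ∈ J, |c j| = 1) →
        atomicNorm (Set.range w) (∑ j ∈ J, c j • w j) = J.card)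
    (hrec : ∀ z₀ ∈ sparseSpan (Set.range w) s,
      ∀ z : EuclideanSpace ℝ (Fin d), A z = A z₀ → z ≠ z₀ →
        atomicNorm (Set.range w) z₀ < atomicNorm (Set.range w) z)
    (U : Finset (Finset (Fin N)))
    (hUcard : ∀ J ∈ U, J.card = t)
    (hUne : U.Nonempty)
    (hUsep : ∀ J ∈ U, ∀ J' ∈ U, J ≠ J' → 2 * (J ∩ J').card < t) :
    (U.card : ℝ) ≤ 3 ^ m := by
  classical
  set xs : Finset (Fin N) → EuclideanSpace ℝ (Fin d) := fun J => ∑ j ∈ J, w j with hxs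
  set E : Submodule ℝ (EuclideanSpace ℝ (Fin m)) :=
    (Submodule.span ℝ (Set.range w)).map A with hE
  have hmemE : ∀ J : Finset (Fin N), A (xs J) ∈ E := by
    intro J
    exact Submodule.mem_map_of_mem
      (Submodule.sum_mem _ fun j _ => Submodule.subset_span ⟨j, rfl⟩)
  have hQne : ∀ y : EuclideanSpace ℝ (Fin m), y ∈ E → (QSet w A y).Nonempty := by
    intro y hy
    obtain ⟨z, hz, rfl⟩ := Submodule.mem_map.1 hy
    rw [Submodule.mem_span_range_iff_exists_fun ℝ] at hz
    obtain ⟨c, hc⟩ := hz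
    exact ⟨∑ i, |c i|, N, c, w, fun i => ⟨i, rfl⟩, by rw [hc], rfl⟩
  have hQmem : ∀ (J : Finset (Fin N)) (c : Fin N → ℝ),
      (∑ j ∈ J, |c j|) ∈ QSet w A (A (∑ j ∈ J, c j • w j)) := by
    intro J c
    obtain ⟨k, c', w', hw', h1, h2⟩ := finset_rep w J c
    exact ⟨k, c', w', hw', by rw [← h1], h2⟩
  have hxs1 : ∀ J : Finset (Fin N), xs J = ∑ j ∈ J, (1:ℝ) • w j := by
    intro J
    rw [hxs]
    exact Finset.sum_congr rfl fun j _ => (one_smul ℝ (w j)).symm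
  have hQup : ∀ J ∈ U, QF w A (A (xs J)) ≤ t := by
    intro J hJ
    have h1 := hQmem J (fun _ => (1:ℝ))
    rw [← hxs1 J] at h1
    have h2 := QF_le h1
    calc QF w A (A (xs J)) ≤ ∑ _j ∈ J, |(1:ℝ)| := h2
    _ = J.card := by simp
    _ = t := by rw [hUcard J hJ]
  have hQdiff : ∀ J ∈ U, ∀ J' ∈ U, J ≠ J' →
      ((t:ℝ) + 1) ≤ QF w A (A (xs J) - A (xs J')) := by
    intro J hJ J' hJ' hne
    set D : Finset (Fin N) := (J \ J') ∪ (J' \ J) with hD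
    set σ : Fin N → ℝ := fun j => if j ∈ J then 1 else -1 with hσ
    have hz₀ : xs J - xs J' = ∑ j ∈ D, σ j • w j := by
      have e1 : ∑ j ∈ D, σ j • w j = ∑ j ∈ J \ J', σ j • w j + ∑ j ∈ J' \ J, σ j • w j :=
        Finset.sum_union disjoint_sdiff_sdiff
      have e2 : ∑ j ∈ J \ J', σ j • w j = ∑ j ∈ J \ J', w j := by
        apply Finset.sum_congr rfl
        intro j hj
        rw [hσ]
        simp only [(Finset.mem_sdiff.1 hj).1, if_true, one_smul]
      have e3 : ∑ j ∈ J' \ J, σ j • w j = -∑ j ∈ J' \ J, w j := by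
        rw [← Finset.sum_neg_distrib]
        apply Finset.sum_congr rfl
        intro j hj
        rw [hσ]
        simp only [(Finset.mem_sdiff.1 hj).2, if_false, neg_smul, one_smul]
      have e4 : ∑ j ∈ J ∩ J', w j + ∑ j ∈ J \ J', w j = xs J :=
        Finset.sum_inter_add_sum_sdiff J J' w
      have e5 : ∑ j ∈ J' ∩ J, w j + ∑ j ∈ J' \ J, w j = xs J' :=
        Finset.sum_inter_add_sum_sdiff J' J w
      have e6 : J ∩ J' = J' ∩ J := Finset.inter_comm J J'
      rw [e1, e2, e3, ← e4, ← e5, e6]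
      abel
    have hDcard : D.card = J.card + J'.card - 2 * (J ∩ J').card := by
      rw [hD, Finset.card_union_of_disjoint disjoint_sdiff_sdiff]
      have c1 := Finset.card_sdiff_add_card_inter J J'
      have c2 := Finset.card_sdiff_add_card_inter J' J
      rw [Finset.inter_comm J' J] at c2
      omega
    have hsep := hUsep J hJ J' hJ' hne
    have hJc := hUcard J hJ
    have hJc' := hUcard J' hJ'
    have hDt : t + 1 ≤ D.card ∧ D.card ≤ s ∧ 0 < D.card := by
      rw [hDcard, hJc, hJc']
      omega
    have hDne : D.Nonempty := Finset.card_pos.1 hDt.2.2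
    have hσabs : ∀ j ∈ D, |σ j| = 1 := by
      intro j _
      rw [hσ]
      by_cases h : j ∈ J <;> simp [h]
    have hnorm : atomicNorm (Set.range w) (∑ j ∈ D, σ j • w j) = D.card :=
      heven D hDt.2.1 σ hσabs
    have hsp : (∑ j ∈ D, σ j • w j) ∈ sparseSpan (Set.range w) s :=
      finset_mem_sparseSpan w D σ hDt.2.1 hDne
    -- the Q set at the difference point
    have hAdiff : A (xs J) - A (xs J') = A (∑ j ∈ D, σ j • w j) := by
      rw [← map_sub, hz₀]
    have hQmemD := hQmem D σ
    rw [← hAdiff] at hQmemD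
    apply le_csInf ⟨_, hQmemD⟩
    rintro r ⟨n, c, ww, hww, hA, rfl⟩
    set z : EuclideanSpace ℝ (Fin d) := ∑ i, c i • ww i with hz
    have hAz : A z = A (∑ j ∈ D, σ j • w j) := by rw [← hAdiff]; exact hA
    have hblow : (D.card : ℝ) ≤ ∑ i, |c i| := by
      by_cases hcase : z = ∑ j ∈ D, σ j • w j
      · rw [← hnorm, ← hcase]
        exact atomicNorm_le hww rfl
      · have := hrec _ hsp z hAz hcase
        rw [hnorm] at this
        have h2 : atomicNorm (Set.range w) z ≤ ∑ i, |c i| := atomicNorm_le hww rfl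
        linarith
    have : ((t:ℝ) + 1) ≤ (D.card : ℝ) := by exact_mod_cast hDt.1
    linarith
  -- geometry on the subspace E
  have hfin : Module.finrank ℝ ↥E ≤ m := by
    have h1 := Submodule.finrank_le E
    rwa [finrank_euclideanSpace_fin] at h1
  set e := Module.finrank ℝ ↥E with he
  set φ := (stdOrthonormalBasis ℝ ↥E).repr with hφ
  set ψ : Finset (Fin N) → EuclideanSpace ℝ (Fin e) := fun J => φ ⟨A (xs J), hmemE J⟩ with hψ
  set Cm := U.sup' hUne (fun J => ‖A (xs J)‖) with hCm
  have hCm0 : 0 ≤ Cm := by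
    obtain ⟨J0, hJ0⟩ := hUne
    exact le_trans (norm_nonneg (A (xs J0))) (Finset.le_sup' (fun J => ‖A (xs J)‖) hJ0)
  set ε : ℝ := (4 * (Cm + 1))⁻¹ with hεd
  have hεpos : 0 < ε := by rw [hεd]; positivity
  set p : EuclideanSpace ℝ (Fin e) → ℝ :=
    fun v => QF w A ((φ.symm v : ↥E) : EuclideanSpace ℝ (Fin m)) + ε * ‖v‖ with hp
  have hvalE : ∀ v : EuclideanSpace ℝ (Fin e), ((φ.symm v : ↥E) : EuclideanSpace ℝ (Fin m)) ∈ E :=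
    fun v => (φ.symm v).2
  have hpadd : ∀ v₁ v₂, p (v₁ + v₂) ≤ p v₁ + p v₂ := by
    intro v₁ v₂
    rw [hp]
    simp only [map_add, Submodule.coe_add]
    have h1 := QF_add (hQne _ (hvalE v₁)) (hQne _ (hvalE v₂))
    have h2 : ‖v₁ + v₂‖ ≤ ‖v₁‖ + ‖v₂‖ := norm_add_le _ _
    have h3 : ε * ‖v₁ + v₂‖ ≤ ε * ‖v₁‖ + ε * ‖v₂‖ := by
      rw [← mul_add]
      exact mul_le_mul_of_nonneg_left h2 hεpos.le
    exact le_trans (add_le_add h1 h3) (by ring_nf; exact le_refl _)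
  have hpsmul : ∀ (a : ℝ) v, p (a • v) = |a| * p v := by
    intro a v
    rw [hp]
    simp only [_root_.map_smul, Submodule.coe_smul]
    rw [QF_smul a (hQne _ (hvalE v)), norm_smul]
    simp only [Real.norm_eq_abs]
    ring
  have hlow : ∀ v, ε * ‖v‖ ≤ p v := by
    intro v
    show ε * ‖v‖ ≤ QF w A ((φ.symm v : ↥E) : EuclideanSpace ℝ (Fin m)) + ε * ‖v‖
    have := QF_nonneg (w := w) (A := A) ((φ.symm v : ↥E) : EuclideanSpace ℝ (Fin m))
    linarith
  -- evaluation of p on the points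
  have hpψ : ∀ J, φ.symm (ψ J) = ⟨A (xs J), hmemE J⟩ := by
    intro J
    rw [hψ]
    exact (stdOrthonormalBasis ℝ ↥E).repr.symm_apply_apply _
  have hpevalJ : ∀ J ∈ U, p (ψ J) ≤ (t:ℝ) + 1/4 := by
    intro J hJ
    rw [hp]
    simp only []
    rw [hpψ J]
    have h1 : QF w A ((⟨A (xs J), hmemE J⟩ : ↥E) : EuclideanSpace ℝ (Fin m)) ≤ t := hQup J hJ
    have h2 : ‖ψ J‖ = ‖A (xs J)‖ := by
      rw [hψ]
      simp only []
      rw [LinearIsometryEquiv.norm_map]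
      rfl
    have h3 : ‖A (xs J)‖ ≤ Cm := Finset.le_sup' (fun J => ‖A (xs J)‖) hJ
    have h4 : ε * ‖ψ J‖ ≤ 1/4 := by
      rw [h2, hεd]
      rw [inv_mul_eq_div, div_le_div_iff₀ (by positivity) (by norm_num)]
      nlinarith [norm_nonneg (A (xs J))]
    exact add_le_add h1 h4 |>.trans (le_refl _)
  have hpdiff : ∀ J ∈ U, ∀ J' ∈ U, J ≠ J' → ((t:ℝ)) + 1 ≤ p (ψ J - ψ J') := by
    intro J hJ J' hJ' hne
    rw [hp]
    simp only []
    have hsymm : φ.symm (ψ J - ψ J') = ⟨A (xs J), hmemE J⟩ - ⟨A (xs J'), hmemE J'⟩ := by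
      rw [map_sub, hpψ J, hpψ J']
    rw [hsymm]
    have hcoe : ((⟨A (xs J), hmemE J⟩ - ⟨A (xs J'), hmemE J'⟩ : ↥E) : EuclideanSpace ℝ (Fin m))
        = A (xs J) - A (xs J') := rfl
    rw [hcoe]
    have h1 := hQdiff J hJ J' hJ' hne
    have h2 : 0 ≤ ε * ‖ψ J - ψ J'‖ := by positivity
    linarith
  -- injectivity of ψ on U
  have hinj : Set.InjOn ψ ↑U := by
    intro J hJ J' hJ' heq
    by_contra hne
    have h1 := hQdiff J hJ J' hJ' hne
    have h2 : A (xs J) = A (xs J') := by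
      have h0 : φ.symm (ψ J) = φ.symm (ψ J') := by rw [heq]
      rw [hpψ J, hpψ J'] at h0
      exact Subtype.ext_iff.1 h0
    rw [h2, sub_self] at h1
    have h3 : QF w A (0 : EuclideanSpace ℝ (Fin m)) ≤ 0 := by
      apply QF_le
      exact ⟨0, ![], ![], by simp, by simp, by simp⟩
    have ht0 : (0:ℝ) < (t:ℝ) + 1 := by positivity
    linarith
  set S := U.image ψ with hS
  have hScard : S.card = U.card := Finset.card_image_of_injOn hinj
  have hpack := packing_lemma p hpadd hpsmul hεpos hlow S
      (R := (t:ℝ) + 1/4) (r := (t:ℝ) + 1/2)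
      (by positivity) (by positivity)
      (by
        intro v hv
        obtain ⟨J, hJ, rfl⟩ := Finset.mem_image.1 hv
        exact hpevalJ J hJ)
      (by
        intro v₁ hv₁ v₂ hv₂ hvne
        obtain ⟨J, hJ, rfl⟩ := Finset.mem_image.1 hv₁
        obtain ⟨J', hJ', rfl⟩ := Finset.mem_image.1 hv₂
        have hne : J ≠ J' := fun h => hvne (by rw [h])
        have h1 := hpdiff J hJ J' hJ' hne
        have h05 : ((t:ℝ)) + 1/2 < ((t:ℝ)) + 1 := by norm_num
        exact lt_of_lt_of_le h05 h1)
  rw [hScard] at hpack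
  have hbase : ((2 * ((t:ℝ) + 1/4) + ((t:ℝ) + 1/2)) / ((t:ℝ) + 1/2)) ≤ 3 := by
    rw [div_le_iff₀ (by positivity)]
    ring_nf
    nlinarith [(Nat.one_le_cast (α := ℝ)).2 ht1]
  have hbase0 : (0:ℝ) ≤ ((2 * ((t:ℝ) + 1/4) + ((t:ℝ) + 1/2)) / ((t:ℝ) + 1/2)) := by positivity
  calc (U.card : ℝ) ≤ ((2 * ((t:ℝ) + 1/4) + ((t:ℝ) + 1/2)) / ((t:ℝ) + 1/2)) ^ e := hpack
  _ ≤ 3 ^ e := pow_le_pow_left₀ hbase0 hbase e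
  _ ≤ 3 ^ m := by
      apply pow_le_pow_right₀ (by norm_num) hfin
set_option maxHeartbeats 1000000 in
theorem stmt18 {d m N s : ℕ} (hs : 2 < s)
    (w : Fin N → EuclideanSpace ℝ (Fin d))
    (A : EuclideanSpace ℝ (Fin d) →ₗ[ℝ] EuclideanSpace ℝ (Fin m))
    (heven : ∀ J : Finset (Fin N), J.card ≤ s →
      ∀ c : Fin N → ℝ, (∀ j ∈ J, |c j| = 1) →
        atomicNorm (Set.range w) (∑ j ∈ J, c j • w j) = J.card)
    (hrec : ∀ z₀ ∈ sparseSpan (Set.range w) s,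
      ∀ z : EuclideanSpace ℝ (Fin d), A z = A z₀ → z ≠ z₀ →
        atomicNorm (Set.range w) z₀ < atomicNorm (Set.range w) z) :
    1 / (8 * Real.log 3) * s * Real.log (N / (2 * s)) ≤ m := by
  classical
  have hs0 : 0 < s := by omega
  set L3 := Real.log 3 with hL3d
  have hL3 : 1 < L3 := by
    rw [hL3d, Real.lt_log_iff_exp_lt (by norm_num)]
    calc Real.exp 1 < 2.7182818286 := Real.exp_one_lt_d9
    _ < 3 := by norm_num
  have hL3pos : 0 < L3 := by linarith
  set x := Real.log ((N : ℝ) / (2 * s)) with hxd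
  have hkey : (s : ℝ) * x ≤ 8 * L3 * m → 1 / (8 * L3) * s * x ≤ m := by
    intro hfin
    rw [show (1:ℝ) / (8 * L3) * s * x = ((s:ℝ) * x) / (8 * L3) by ring,
      div_le_iff₀ (by positivity)]
    linarith
  apply hkey
  have harg0 : (0:ℝ) ≤ (N : ℝ) / (2 * s) := by positivity
  rcases le_or_gt ((N : ℝ) / (2 * s)) 6561 with heasy | hhard
  · -- easy regime
    have hx8 : x ≤ 8 * L3 := by
      rcases eq_or_lt_of_le harg0 with h0 | hpos
      · rw [hxd, ← h0, Real.log_zero]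
        positivity
      · calc x ≤ Real.log 6561 := Real.log_le_log hpos heasy
        _ = 8 * L3 := by
          rw [hL3d, show (6561:ℝ) = 3 ^ 8 by norm_num, Real.log_pow]
          push_cast
          ring
    rcases le_or_gt x 0 with hx0 | hx0
    · have h1 : (s : ℝ) * x ≤ 0 := mul_nonpos_of_nonneg_of_nonpos (by positivity) hx0
      have h2 : (0:ℝ) ≤ 8 * L3 * m := by positivity
      linarith
    · -- N/(2s) > 1, so s ≤ N and m ≥ s
      have hgt1 : (1:ℝ) < (N : ℝ) / (2 * s) := by
        by_contra hle
        push_neg at hle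
        have := Real.log_nonpos harg0 hle
        rw [← hxd] at this
        linarith
      have hsN : s ≤ N := by
        rw [lt_div_iff₀ (by positivity)] at hgt1
        have h2 : (2 * s : ℝ) < N := by linarith
        have : (s:ℝ) < N := by
          have hs' : (0:ℝ) ≤ s := by positivity
          linarith
        exact_mod_cast this.le
      have hm : s ≤ m := m_ge_s hsN w A heven hrec
      have h1 : (s : ℝ) * x ≤ (s : ℝ) * (8 * L3) :=
        mul_le_mul_of_nonneg_left hx8 (by positivity)
      have h2 : (s : ℝ) ≤ m := by exact_mod_cast hm
      nlinarith
  · -- hard regime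
    have h2spos : (0:ℝ) < 2 * s := by positivity
    have hNs : (13122:ℝ) * s < N := by
      rw [lt_div_iff₀ h2spos] at hhard
      linarith
    have hsN : s ≤ N := by
      have h1 : (s:ℝ) < N := by
        have hs' : (3:ℝ) ≤ s := by exact_mod_cast hs
        nlinarith
      exact_mod_cast h1.le
    set t := s / 2 with htd
    set u := t / 2 with hud
    set h := t - u with hhd
    have ht1 : 1 ≤ t := by omega
    have h2t : 2 * t ≤ s := by omega
    have htN : t ≤ N := by omega
    have huh : u + h = t := by omega
    have h4h : s - 1 ≤ 4 * h := by omega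
    -- greedy selection
    set rel : Finset (Fin N) → Finset (Fin N) → Prop := fun J₁ J₂ => t ≤ 2 * (J₁ ∩ J₂).card
      with hreld
    have hsym : ∀ a b, rel a b → rel b a := by
      intro a b hab
      rw [hreld] at *
      rwa [Finset.inter_comm]
    set T₀ := Finset.powersetCard t (Finset.univ : Finset (Fin N)) with hT₀
    have hT₀card : ∀ J ∈ T₀, J.card = t := by
      intro J hJ
      exact (Finset.mem_powersetCard.1 hJ).2
    have hrefl : ∀ a ∈ T₀, rel a a := by
      intro a ha
      rw [hreld]
      simp only [Finset.inter_self]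
      rw [hT₀card a ha]
      omega
    have hB : ∀ a ∈ T₀, (T₀.filter (fun b => rel a b)).card ≤ 2 ^ t * Nat.choose N u := by
      intro a ha
      exact bad_count a (hT₀card a ha)
    obtain ⟨U, hUsub, hUgood, hUcount⟩ := greedy_select rel hsym (2 ^ t * Nat.choose N u)
      T₀ hrefl hB
    have hT₀c : T₀.card = Nat.choose N t := by
      rw [hT₀, Finset.card_powersetCard, Finset.card_univ, Fintype.card_fin]
    have hchooset : 0 < Nat.choose N t := Nat.choose_pos htN
    have hUne : U.Nonempty := by
      rcases U.eq_empty_or_nonempty with rfl | hne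
      · rw [hT₀c] at hUcount
        simp at hUcount
        omega
      · exact hne
    have hUcard : ∀ J ∈ U, J.card = t := fun J hJ => hT₀card J (hUsub hJ)
    have hUsep : ∀ J ∈ U, ∀ J' ∈ U, J ≠ J' → 2 * (J ∩ J').card < t := by
      intro J hJ J' hJ' hne
      have := hUgood J hJ J' hJ' hne
      rw [hreld] at this
      omega
    -- packing bound
    have hpack : (U.card : ℝ) ≤ 3 ^ m :=
      packing_count ht1 h2t w A heven hrec U hUcard hUne hUsep
    -- binomial ratio
    set q : ℝ := ((N : ℝ) - t + 1) / t with hqd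
    have htrpos : (0:ℝ) < t := by exact_mod_cast ht1
    have htr : 2 * (t:ℝ) ≤ s := by exact_mod_cast h2t
    have hsr : (3:ℝ) ≤ s := by exact_mod_cast hs
    have hNr : (13122:ℝ) * s ≤ N := hNs.le
    have htNr : (t : ℝ) ≤ N := by exact_mod_cast htN
    have hqpos : 0 < q := by
      rw [hqd]
      apply div_pos _ htrpos
      linarith
    have hratio := choose_ratio htN (by omega) h (by omega)
    rw [show t / 2 + h = t by omega] at hratio
    rw [← hud, ← hqd] at hratio
    -- cast the greedy count
    have hcount : (Nat.choose N t : ℝ) ≤ (U.card : ℝ) * (2 ^ t * Nat.choose N u) := by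
      rw [← hT₀c]
      exact_mod_cast hUcount
    have hupos : (0:ℝ) < Nat.choose N u := by
      have : 0 < Nat.choose N u := Nat.choose_pos (by omega)
      exact_mod_cast this
    have hqM : q ^ h ≤ (U.card : ℝ) * 2 ^ t := by
      have h1 : q ^ h * Nat.choose N u ≤ ((U.card : ℝ) * 2 ^ t) * Nat.choose N u := by
        calc q ^ h * Nat.choose N u ≤ Nat.choose N t := hratio
        _ ≤ (U.card : ℝ) * (2 ^ t * Nat.choose N u) := hcount
        _ = ((U.card : ℝ) * 2 ^ t) * Nat.choose N u := by ring
      exact (mul_le_mul_iff_of_pos_right hupos).1 h1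
    have hq3M : q ^ h ≤ 3 ^ m * 2 ^ t := by
      calc q ^ h ≤ (U.card : ℝ) * 2 ^ t := hqM
      _ ≤ 3 ^ m * 2 ^ t := by
          apply mul_le_mul_of_nonneg_right hpack (by positivity)
    -- take logs
    set L2 := Real.log 2 with hL2d
    have hL2nn : 0 ≤ L2 := Real.log_nonneg (by norm_num)
    have hL23 : L2 ≤ L3 := by
      rw [hL2d, hL3d]
      exact Real.log_le_log (by norm_num) (by norm_num)
    have hlogcount : (h : ℝ) * Real.log q ≤ m * L3 + t * L2 := by
      have h1 : Real.log (q ^ h) ≤ Real.log ((3:ℝ) ^ m * 2 ^ t) :=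
        Real.log_le_log (pow_pos hqpos h) hq3M
      rw [Real.log_pow, Real.log_mul (by positivity) (by positivity),
        Real.log_pow, Real.log_pow] at h1
      rw [← hL3d, ← hL2d] at h1
      exact_mod_cast h1
    have hq3 : 3 * ((N : ℝ) / (2 * s)) ≤ q := by
      rw [hqd, show (3:ℝ) * ((N : ℝ) / (2 * s)) = (3 * N) / (2 * s) by ring,
        div_le_div_iff₀ h2spos htrpos]
      nlinarith [mul_le_mul_of_nonneg_left htr (by positivity : (0:ℝ) ≤ (N:ℝ)),
        mul_le_mul_of_nonneg_left hNr (by positivity : (0:ℝ) ≤ (s:ℝ)),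
        mul_le_mul_of_nonneg_left htr (by positivity : (0:ℝ) ≤ (s:ℝ))]
    have hx8 : 8 * L3 ≤ x := by
      rw [hxd, hL3d, show (8:ℝ) * Real.log 3 = Real.log (3 ^ 8) by
        rw [Real.log_pow]; push_cast; ring]
      exact Real.log_le_log (by norm_num) (by norm_num at hhard ⊢; linarith)
    have hlogq : x + L3 ≤ Real.log q := by
      have h1 : Real.log (3 * ((N : ℝ) / (2 * s))) ≤ Real.log q :=
        Real.log_le_log (by positivity) hq3
      rw [Real.log_mul (by norm_num) (by positivity), ← hL3d, ← hxd] at h1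
      linarith
    -- final arithmetic
    have hxpos : 0 ≤ x + L3 := by linarith
    have hhr : ((s:ℝ) - 1) / 4 ≤ (h : ℝ) := by
      have : ((s - 1 : ℕ) : ℝ) ≤ ((4 * h : ℕ) : ℝ) := by exact_mod_cast h4h
      push_cast [Nat.cast_sub (by omega : 1 ≤ s)] at this
      linarith
    have hlqnn : 0 ≤ Real.log q := by linarith
    have P1 : ((s:ℝ) - 1) / 4 * (x + L3) ≤ (h : ℝ) * Real.log q :=
      mul_le_mul hhr hlogq hxpos (by positivity)
    have P2 : (t : ℝ) * L2 ≤ ((s:ℝ) / 2) * L3 := by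
      apply mul_le_mul (by linarith) hL23 hL2nn (by linarith)
    have P3 : ((s:ℝ) - 2) * (8 * L3) ≤ ((s:ℝ) - 2) * x :=
      mul_le_mul_of_nonneg_left hx8 (by linarith)
    have P4 : (3:ℝ) * L3 ≤ (s:ℝ) * L3 := mul_le_mul_of_nonneg_right hsr hL3pos.le
    nlinarith [P1, P2, P3, P4, hlogcount]
end

section
/- For integers 0 < t < N, there exists a family U of subsets of {1,…,N} such that: every set in U has exactly t elements; any two distinct sets I, J ∈ U satisfy |I ∩ J| < t/2; and |U| ≥ (N/(4t))^{t/2}. -/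
open Finset

-- (3s+1) * C(2s,s)^2 ≤ 16^s
lemma aux_central (s : ℕ) : (3*s+1) * (Nat.centralBinom s)^2 ≤ 16^s := by
  induction s with
  | zero => simp [Nat.centralBinom]
  | succ s ih =>
    have key := Nat.succ_mul_centralBinom_succ s
    have h1 : (s+1)^2 * ((3*(s+1)+1) * (Nat.centralBinom (s+1))^2)
        = (3*s+4) * (2*(2*s+1))^2 * (Nat.centralBinom s)^2 := by
      have : ((s+1) * Nat.centralBinom (s+1))^2 = (2*(2*s+1))^2 * (Nat.centralBinom s)^2 := by
        rw [key]; ring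
      nlinarith [this]
    have h2 : (3*s+4) * (2*(2*s+1))^2 * (Nat.centralBinom s)^2
        ≤ (s+1)^2 * (16 * ((3*s+1) * (Nat.centralBinom s)^2)) := by
      have hq : (3*s+4) * (2*(2*s+1))^2 ≤ (s+1)^2 * (16 * (3*s+1)) := by nlinarith
      calc (3*s+4) * (2*(2*s+1))^2 * (Nat.centralBinom s)^2
          ≤ ((s+1)^2 * (16 * (3*s+1))) * (Nat.centralBinom s)^2 :=
            Nat.mul_le_mul_right _ hq
        _ = (s+1)^2 * (16 * ((3*s+1) * (Nat.centralBinom s)^2)) := by ring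
    have h3 : (s+1)^2 * ((3*(s+1)+1) * (Nat.centralBinom (s+1))^2)
        ≤ (s+1)^2 * (16 * 16^s) := by
      rw [h1]
      exact le_trans h2 (Nat.mul_le_mul_left _ (Nat.mul_le_mul_left _ ih))
    have := Nat.le_of_mul_le_mul_left h3 (by positivity)
    simpa [pow_succ, mul_comm] using this

lemma aux_half_sq (t s : ℕ) (ht : 1 ≤ t) (hs : s = (t+1)/2) :
    (3*s+1) * (t.choose s)^2 ≤ 4^t := by
  rcases Nat.even_or_odd t with ⟨m, hm⟩ | ⟨m, hm⟩
  · -- t = 2m, s = m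
    have hsm : s = m := by omega
    have h2m : t = 2*m := by omega
    rw [hsm, h2m]
    have : (2*m).choose m = Nat.centralBinom m := (Nat.centralBinom_eq_two_mul_choose m).symm
    rw [this]
    calc (3*m+1) * (Nat.centralBinom m)^2 ≤ 16^m := aux_central m
      _ ≤ 4^(2*m) := by rw [pow_mul]; norm_num
  · -- t = 2m+1, s = m+1
    have hsm : s = m+1 := by omega
    subst hsm
    have hcb : Nat.centralBinom (m+1) = 2 * t.choose (m+1) := by
      have h1 : Nat.centralBinom (m+1) = (2*(m+1)).choose (m+1) :=
        Nat.centralBinom_eq_two_mul_choose (m+1)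
      have h2 : (2*(m+1)) = t + 1 := by omega
      have h3 : (t+1).choose (m+1) = t.choose m + t.choose (m+1) := Nat.choose_succ_succ t m
      have h4 := Nat.choose_symm (show m+1 ≤ t by omega)
      rw [show t - (m+1) = m from by omega] at h4
      rw [h1, h2, h3, ← h4]; ring
    have key : 4 * ((3*(m+1)+1) * (t.choose (m+1))^2) ≤ 4 * 4^t := by
      calc 4 * ((3*(m+1)+1) * (t.choose (m+1))^2)
          = (3*(m+1)+1) * (Nat.centralBinom (m+1))^2 := by rw [hcb]; ring
        _ ≤ 16^(m+1) := aux_central (m+1)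
        _ = 4^(2*(m+1)) := by rw [pow_mul]; norm_num
        _ = 4 * 4^t := by rw [show 2*(m+1) = t+1 by omega]; ring
    omega

lemma aux_exp_pow (s : ℕ) (hs : 1 ≤ s) :
    Real.exp 1 * (s:ℝ)^(s+1) ≤ ((s:ℝ)+1)^(s+1) := by
  have hspos : (0:ℝ) < s := by exact_mod_cast hs
  have hs1 : (0:ℝ) < (s:ℝ)+1 := by positivity
  have h1 : (s:ℝ)/((s:ℝ)+1) ≤ Real.exp (-(1/((s:ℝ)+1))) := by
    have h := Real.add_one_le_exp (-(1/((s:ℝ)+1)))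
    have he : -(1/((s:ℝ)+1)) + 1 = (s:ℝ)/((s:ℝ)+1) := by field_simp; ring
    linarith
  have h2 : ((s:ℝ)/((s:ℝ)+1))^(s+1) ≤ Real.exp (-(1/((s:ℝ)+1)))^(s+1) :=
    pow_le_pow_left₀ (by positivity) h1 _
  rw [← Real.exp_nat_mul] at h2
  have he2 : ((s:ℕ)+1 : ℕ) * (-(1/((s:ℝ)+1))) = -1 := by push_cast; field_simp
  rw [he2, Real.exp_neg] at h2
  rw [div_pow] at h2
  have hexp : (0:ℝ) < Real.exp 1 := Real.exp_pos 1
  rw [div_le_iff₀ (by positivity), inv_mul_eq_div, le_div_iff₀ hexp] at h2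
  linarith [h2]

lemma aux_factorial (s : ℕ) (hs : 1 ≤ s) :
    (s.factorial : ℝ) * Real.exp 1 ^ s ≤ Real.exp 1 * (s:ℝ)^(s+1) := by
  induction s, hs using Nat.le_induction with
  | base => simp [Nat.factorial]
  | succ s hs ih =>
    have hkey := aux_exp_pow s hs
    have hexp : (0:ℝ) < Real.exp 1 := Real.exp_pos 1
    have h1 : ((s+1).factorial : ℝ) * Real.exp 1 ^ (s+1)
        = ((s:ℝ)+1) * Real.exp 1 * ((s.factorial : ℝ) * Real.exp 1 ^ s) := by
      rw [Nat.factorial_succ]; push_cast; ring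
    rw [h1]
    calc ((s:ℝ)+1) * Real.exp 1 * ((s.factorial : ℝ) * Real.exp 1 ^ s)
        ≤ ((s:ℝ)+1) * Real.exp 1 * (Real.exp 1 * (s:ℝ)^(s+1)) := by
          apply mul_le_mul_of_nonneg_left ih (by positivity)
      _ ≤ ((s:ℝ)+1) * Real.exp 1 * ((s:ℝ)+1)^(s+1) := by
          apply mul_le_mul_of_nonneg_left hkey (by positivity)
      _ = Real.exp 1 * ((s:ℝ)+1)^(s+2) := by ring
      _ = Real.exp 1 * (((s:ℕ)+1 : ℕ):ℝ)^(s+1+1) := by push_cast; ring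

lemma aux_X (N t s : ℕ) (ht : 1 ≤ t) (hs : s = (t+1)/2) (hN : 4*t+1 ≤ N) :
    ((4*(N:ℝ))/t)^s ≤ (3*(s:ℝ)+1) * (N.choose s : ℝ) := by
  have hts : 2*s ≤ t+1 ∧ t ≤ 2*s ∧ 1 ≤ s ∧ s ≤ t := by omega
  obtain ⟨h2s, ht2s, hs1, hst⟩ := hts
  have hsN : s ≤ N := by omega
  have htR : (1:ℝ) ≤ t := by exact_mod_cast ht
  have hNR : 4*(t:ℝ)+1 ≤ N := by exact_mod_cast hN
  rcases lt_or_ge s 3 with hsmall | hbig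
  · -- s = 1 or s = 2
    interval_cases s
    · -- s = 1
      rw [pow_one, Nat.choose_one_right]
      have : (4*(N:ℝ))/t ≤ 4*(N:ℝ) := by
        apply div_le_self (by positivity) htR
      push_cast
      nlinarith [this]
    · -- s = 2
      have ht3 : (3:ℝ) ≤ t := by
        have : 3 ≤ t := by omega
        exact_mod_cast this
      have hC : (N.choose 2 : ℝ) = (N:ℝ) * ((N:ℝ)-1)/2 := by
        rw [Nat.cast_choose_two]
      rw [hC]
      have hbound : (4*(N:ℝ))/t ≤ 4*(N:ℝ)/3 := by
        apply div_le_div_of_nonneg_left (by positivity) (by norm_num) ht3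
      have h2 : ((4*(N:ℝ))/t)^2 ≤ (4*(N:ℝ)/3)^2 := by
        apply pow_le_pow_left₀ (by positivity) hbound
      have hN13 : (13:ℝ) ≤ N := by nlinarith
      nlinarith [h2]
  · -- s ≥ 3
    have hsR : (3:ℝ) ≤ s := by exact_mod_cast hbig
    have he_lb : (2.718:ℝ) ≤ Real.exp 1 := by
      have := Real.exp_one_gt_d9; linarith
    have he_ub : Real.exp 1 ≤ (2.72:ℝ) := by
      have := Real.exp_one_lt_d9; linarith
    have htsR : 2*(s:ℝ)-1 ≤ t := by
      have : 2*s - 1 ≤ t := by omega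
      have h2 : ((2*s - 1 : ℕ) : ℝ) = 2*(s:ℝ)-1 := by
        push_cast [Nat.cast_sub (by omega : 1 ≤ 2*s)]; ring
      rw [← h2]; exact_mod_cast this
    obtain ⟨a, ha⟩ : ∃ a : ℝ, a = (N:ℝ)+1-(s:ℝ) := ⟨_, rfl⟩
    have haPos : 0 < a := by
      have : (s:ℝ) ≤ N := by exact_mod_cast hsN
      rw [ha]; linarith
    have key3 : 4*(N:ℝ)*s ≤ Real.exp 1 * ((t:ℝ)*a) := by
      have hA : 0 ≤ ((t:ℝ) - (2*s-1)) * a := by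
        apply mul_nonneg (by linarith) (le_of_lt haPos)
      have hB : 0 ≤ ((N:ℝ) - (4*t+1)) * (2.718*(t:ℝ) - 4*s) := by
        apply mul_nonneg (by linarith)
        nlinarith
      have hN8 : 8*(s:ℝ)-3 ≤ N := by linarith
      have hC : 0 ≤ ((N:ℝ) - (8*s-3)) * (1.436*(s:ℝ) - 2.718) := by
        apply mul_nonneg (by linarith) (by linarith)
      have hcore : 4*(N:ℝ)*s ≤ 2.718 * ((t:ℝ)*a) := by
        nlinarith [hA, hC, sq_nonneg ((s:ℝ)-3), hsR]
      have : 2.718 * ((t:ℝ)*a) ≤ Real.exp 1 * ((t:ℝ)*a) := by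
        apply mul_le_mul_of_nonneg_right he_lb
        positivity
      linarith
    have hdiv : (4*(N:ℝ))/t ≤ Real.exp 1 * a / s := by
      rw [div_le_div_iff₀ (by linarith) (by linarith)]
      calc 4*(N:ℝ)*s ≤ Real.exp 1 * ((t:ℝ)*a) := key3
        _ = Real.exp 1 * a * t := by ring
    have hpow : ((4*(N:ℝ))/t)^s ≤ (Real.exp 1 * a / s)^s :=
      pow_le_pow_left₀ (by positivity) hdiv s
    have hexpand : (Real.exp 1 * a / s)^s = Real.exp 1 ^ s * a^s / (s:ℝ)^s := by
      rw [div_pow, mul_pow]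
    have f1 : a^s / (s.factorial : ℝ) ≤ (N.choose s : ℝ) := by
      have := Nat.pow_le_choose (α := ℝ) s N
      have hcast : ((N + 1 - s : ℕ) : ℝ) = a := by
        rw [ha, Nat.cast_sub (by omega)]; push_cast; ring
      rw [← hcast]
      exact this
    have f2 := aux_factorial s hs1
    -- es^s * s! ≤ (3s+1) * s^s
    have f3 : Real.exp 1 ^ s * (s.factorial : ℝ) ≤ (3*(s:ℝ)+1) * (s:ℝ)^s := by
      have : Real.exp 1 * (s:ℝ)^(s+1) ≤ (3*(s:ℝ)+1) * (s:ℝ)^s := by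
        rw [pow_succ]
        have hss : (0:ℝ) < (s:ℝ)^s := by positivity
        calc Real.exp 1 * ((s:ℝ)^s * s) = (Real.exp 1 * s) * (s:ℝ)^s := by ring
          _ ≤ (3*(s:ℝ)+1) * (s:ℝ)^s := by
            apply mul_le_mul_of_nonneg_right _ (le_of_lt hss)
            nlinarith
      calc Real.exp 1 ^ s * (s.factorial : ℝ) = (s.factorial : ℝ) * Real.exp 1 ^ s := by ring
        _ ≤ Real.exp 1 * (s:ℝ)^(s+1) := f2
        _ ≤ (3*(s:ℝ)+1) * (s:ℝ)^s := this
    -- combine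
    have hfacPos : (0:ℝ) < (s.factorial : ℝ) := by exact_mod_cast s.factorial_pos
    have hfin : Real.exp 1 ^ s * a^s / (s:ℝ)^s ≤ (3*(s:ℝ)+1) * (a^s / (s.factorial : ℝ)) := by
      rw [div_le_iff₀ (by positivity)]
      have expand : (3*(s:ℝ)+1) * (a^s / (s.factorial : ℝ)) * (s:ℝ)^s
          = ((3*(s:ℝ)+1) * (s:ℝ)^s) * (a^s / (s.factorial : ℝ)) := by ring
      rw [expand]
      have h1 : (Real.exp 1 ^ s * (s.factorial : ℝ)) * (a^s / (s.factorial:ℝ)) = Real.exp 1 ^ s * a^s := by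
        rw [mul_assoc, mul_comm ((s.factorial:ℝ)) (a^s / (s.factorial:ℝ)),
          div_mul_cancel₀ _ (ne_of_gt hfacPos)]
      rw [← h1]
      apply mul_le_mul_of_nonneg_right f3 (by positivity)
    calc ((4*(N:ℝ))/t)^s ≤ (Real.exp 1 * a / s)^s := hpow
      _ = Real.exp 1 ^ s * a^s / (s:ℝ)^s := hexpand
      _ ≤ (3*(s:ℝ)+1) * (a^s / (s.factorial : ℝ)) := hfin
      _ ≤ (3*(s:ℝ)+1) * (N.choose s : ℝ) := by
          apply mul_le_mul_of_nonneg_left f1 (by positivity)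

lemma aux_family (N t s : ℕ) (ht : 0 < t) (htN : t ≤ N) (h1 : t ≤ 2*s) (h2 : 2*s ≤ t+1) :
    ∃ U : Finset (Finset (Fin N)),
      (∀ I ∈ U, I.card = t) ∧
      (∀ I ∈ U, ∀ J ∈ U, I ≠ J → 2*(I ∩ J).card < t) ∧
      N.choose s ≤ U.card * (t.choose s)^2 := by
  classical
  have hst : s ≤ t := by omega
  set 𝒜 : Finset (Finset (Fin N)) := Finset.powersetCard t Finset.univ with h𝒜
  have hcard𝒜 : 𝒜.card = N.choose t := by
    rw [h𝒜, Finset.card_powersetCard, Finset.card_univ, Fintype.card_fin]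
  set F : Finset (Finset (Finset (Fin N))) := 𝒜.powerset.filter
    (fun U => ∀ I ∈ U, ∀ J ∈ U, I ≠ J → 2*(I ∩ J).card < t) with hF
  have hne : F.Nonempty := ⟨∅, by simp [hF]⟩
  obtain ⟨U, hUF, hmax⟩ := Finset.exists_max_image F Finset.card hne
  rw [hF, Finset.mem_filter, Finset.mem_powerset] at hUF
  obtain ⟨hU𝒜, hUpair⟩ := hUF
  have hcards : ∀ I ∈ U, I.card = t := by
    intro I hI
    have := hU𝒜 hI
    rw [h𝒜, Finset.mem_powersetCard] at this
    exact this.2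
  refine ⟨U, hcards, hUpair, ?_⟩
  -- maximality gives covering
  have hcover : ∀ I ∈ 𝒜, ∃ J ∈ U, t ≤ 2*(I ∩ J).card := by
    intro I hI
    by_contra hcon
    push_neg at hcon
    have hInotU : I ∉ U := by
      intro hIU
      have h3 := hcon I hIU
      rw [Finset.inter_self] at h3
      have hcardI : I.card = t := hcards I hIU
      omega
    have hins : insert I U ∈ F := by
      rw [hF, Finset.mem_filter, Finset.mem_powerset]
      refine ⟨Finset.insert_subset hI hU𝒜, ?_⟩
      intro A hA B hB hAB
      rcases Finset.mem_insert.mp hA with rfl | hA'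
      · rcases Finset.mem_insert.mp hB with rfl | hB'
        · exact absurd rfl hAB
        · exact hcon B hB'
      · rcases Finset.mem_insert.mp hB with rfl | hB'
        · rw [Finset.inter_comm]; exact hcon A hA'
        · exact hUpair A hA' B hB' hAB
    have hle := hmax _ hins
    rw [Finset.card_insert_of_notMem hInotU] at hle
    omega
  have hsub : 𝒜 ⊆ U.biUnion (fun J => 𝒜.filter (fun I => t ≤ 2*(I ∩ J).card)) := by
    intro I hI
    obtain ⟨J, hJ, hJ2⟩ := hcover I hI
    exact Finset.mem_biUnion.mpr ⟨J, hJ, Finset.mem_filter.mpr ⟨hI, hJ2⟩⟩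
  -- bound each ball
  have hbound : ∀ J ∈ U, (𝒜.filter (fun I => t ≤ 2*(I ∩ J).card)).card
      ≤ t.choose s * (N - s).choose (t - s) := by
    intro J hJU
    have hJcard : J.card = t := hcards J hJU
    set g : Finset (Fin N) → Finset (Fin N) := fun I =>
      if h : s ≤ (I ∩ J).card then (Finset.exists_subset_card_eq h).choose else ∅ with hg
    have hgspec : ∀ I, s ≤ (I ∩ J).card → g I ⊆ I ∩ J ∧ (g I).card = s := by
      intro I h
      rw [hg]
      simp only [dif_pos h]
      exact (Finset.exists_subset_card_eq h).choose_spec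
    set f : Finset (Fin N) → ((_ : Finset (Fin N)) × Finset (Fin N)) :=
      fun I => ⟨g I, I \ g I⟩ with hf
    have hsle : ∀ I ∈ 𝒜.filter (fun I => t ≤ 2*(I ∩ J).card), s ≤ (I ∩ J).card := by
      intro I hI
      rw [Finset.mem_filter] at hI
      omega
    have hcardI : ∀ I ∈ 𝒜.filter (fun I => t ≤ 2*(I ∩ J).card), I.card = t := by
      intro I hI
      rw [Finset.mem_filter, h𝒜, Finset.mem_powersetCard] at hI
      exact hI.1.2
    have hmain := Finset.card_le_card_of_injOn f
      (t := (Finset.powersetCard s J).sigma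
        (fun S => Finset.powersetCard (t-s) (Finset.univ \ S)))
      (fun I hI => by
        obtain ⟨hsub', hcardg⟩ := hgspec I (hsle I hI)
        rw [Finset.mem_coe, Finset.mem_sigma]
        constructor
        · rw [Finset.mem_powersetCard]
          exact ⟨hsub'.trans Finset.inter_subset_right, hcardg⟩
        · rw [Finset.mem_powersetCard]
          constructor
          · intro x hx
            rw [Finset.mem_sdiff] at hx ⊢
            exact ⟨Finset.mem_univ x, hx.2⟩
          · rw [Finset.card_sdiff_of_subset (hsub'.trans Finset.inter_subset_left)]
            rw [hcardI I hI, hcardg])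
      (by
        intro I hI I' hI' heq
        simp only [hf, Sigma.mk.inj_iff] at heq
        obtain ⟨hg1, hg2⟩ := heq
        have hg2' : I \ g I = I' \ g I' := eq_of_heq hg2
        have hIsub : g I ⊆ I := ((hgspec I (hsle I hI)).1).trans Finset.inter_subset_left
        have hIsub' : g I' ⊆ I' := ((hgspec I' (hsle I' hI')).1).trans Finset.inter_subset_left
        calc I = g I ∪ (I \ g I) := (Finset.union_sdiff_of_subset hIsub).symm
          _ = g I' ∪ (I' \ g I') := by rw [hg2', hg1]
          _ = I' := Finset.union_sdiff_of_subset hIsub')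
    refine le_trans hmain ?_
    rw [Finset.card_sigma]
    have heach : ∀ S ∈ Finset.powersetCard s J,
        (Finset.powersetCard (t-s) (Finset.univ \ S)).card = (N-s).choose (t-s) := by
      intro S hS
      rw [Finset.mem_powersetCard] at hS
      rw [Finset.card_powersetCard, Finset.card_sdiff_of_subset (Finset.subset_univ S),
        Finset.card_univ, Fintype.card_fin, hS.2]
    rw [Finset.sum_congr rfl heach, Finset.sum_const, Finset.card_powersetCard, hJcard,
      smul_eq_mul]
  -- assemble
  have hcount : N.choose t ≤ U.card * (t.choose s * (N-s).choose (t-s)) := by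
    calc N.choose t = 𝒜.card := hcard𝒜.symm
      _ ≤ (U.biUnion (fun J => 𝒜.filter (fun I => t ≤ 2*(I ∩ J).card))).card :=
          Finset.card_le_card hsub
      _ ≤ ∑ J ∈ U, (𝒜.filter (fun I => t ≤ 2*(I ∩ J).card)).card :=
          Finset.card_biUnion_le
      _ ≤ ∑ _J ∈ U, t.choose s * (N-s).choose (t-s) := Finset.sum_le_sum hbound
      _ = U.card * (t.choose s * (N-s).choose (t-s)) := by
          rw [Finset.sum_const, smul_eq_mul]
  have hid : N.choose t * t.choose s = N.choose s * (N-s).choose (t-s) :=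
    Nat.choose_mul hst
  have hpos : 0 < (N-s).choose (t-s) := Nat.choose_pos (by omega)
  have hfinal : N.choose s * (N-s).choose (t-s) ≤ (U.card * (t.choose s)^2) * (N-s).choose (t-s) := by
    calc N.choose s * (N-s).choose (t-s) = N.choose t * t.choose s := hid.symm
      _ ≤ (U.card * (t.choose s * (N-s).choose (t-s))) * t.choose s :=
          Nat.mul_le_mul_right _ hcount
      _ = (U.card * (t.choose s)^2) * (N-s).choose (t-s) := by ring
  exact Nat.le_of_mul_le_mul_right hfinal hpos

lemma aux_numeric (N t s : ℕ) (ht : 1 ≤ t) (hs : s = (t+1)/2) (hN : 4*t+1 ≤ N) :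
    ((N:ℝ)/(4*t)) ^ ((t:ℝ)/2) * ((t.choose s : ℝ))^2 ≤ (N.choose s : ℝ) := by
  have htR : (1:ℝ) ≤ t := by exact_mod_cast ht
  have hNR : 4*(t:ℝ)+1 ≤ N := by exact_mod_cast hN
  have hbase1 : (1:ℝ) ≤ (N:ℝ)/(4*t) := by
    rw [le_div_iff₀ (by positivity)]
    linarith
  have hsplit : t ≤ 2*s ∧ 2*s ≤ t+1 ∧ 1 ≤ s := by omega
  obtain ⟨h2s, h2s', hs1⟩ := hsplit
  have hA : ((N:ℝ)/(4*t)) ^ ((t:ℝ)/2) ≤ ((N:ℝ)/(4*t)) ^ (s:ℕ) := by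
    calc ((N:ℝ)/(4*t)) ^ ((t:ℝ)/2) ≤ ((N:ℝ)/(4*t)) ^ ((s:ℕ):ℝ) := by
          apply Real.rpow_le_rpow_of_exponent_le hbase1
          have : (t:ℝ) ≤ 2*(s:ℕ) := by exact_mod_cast h2s
          linarith
      _ = ((N:ℝ)/(4*t)) ^ (s:ℕ) := Real.rpow_natCast _ s
  have hB : (3*(s:ℝ)+1) * ((t.choose s:ℝ))^2 ≤ 4^t := by
    have := aux_half_sq t s ht hs
    exact_mod_cast this
  have hX := aux_X N t s ht hs hN
  have hkey : ((N:ℝ)/(4*t)) ^ (s:ℕ) * ((t.choose s : ℝ))^2 ≤ (N.choose s : ℝ) := by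
    have h3s : (0:ℝ) < 3*(s:ℝ)+1 := by positivity
    rw [← mul_le_mul_iff_right₀ h3s]
    calc (3*(s:ℝ)+1) * (((N:ℝ)/(4*t)) ^ (s:ℕ) * ((t.choose s : ℝ))^2)
        = ((N:ℝ)/(4*t)) ^ (s:ℕ) * ((3*(s:ℝ)+1) * ((t.choose s : ℝ))^2) := by ring
      _ ≤ ((N:ℝ)/(4*t)) ^ (s:ℕ) * 4^t := by
          apply mul_le_mul_of_nonneg_left hB (by positivity)
      _ ≤ ((N:ℝ)/(4*t)) ^ (s:ℕ) * 16^s := by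
          apply mul_le_mul_of_nonneg_left _ (by positivity)
          calc (4:ℝ)^t ≤ 4^(2*s) := by
                apply pow_le_pow_right₀ (by norm_num) h2s
            _ = 16^s := by rw [pow_mul]; norm_num
      _ = ((4*(N:ℝ))/t)^s := by
          rw [← mul_pow]
          congr 1
          field_simp
          ring
      _ ≤ (3*(s:ℝ)+1) * (N.choose s : ℝ) := hX
  calc ((N:ℝ)/(4*t)) ^ ((t:ℝ)/2) * ((t.choose s : ℝ))^2
      ≤ ((N:ℝ)/(4*t)) ^ (s:ℕ) * ((t.choose s : ℝ))^2 := by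
        apply mul_le_mul_of_nonneg_right hA (by positivity)
    _ ≤ (N.choose s : ℝ) := hkey

theorem stmt19 (N t : ℕ) (ht : 0 < t) (htN : t < N) :
    ∃ U : Finset (Finset (Fin N)),
      (∀ I ∈ U, I.card = t) ∧
      (∀ I ∈ U, ∀ J ∈ U, I ≠ J → ((I ∩ J).card : ℝ) < t / 2) ∧
      ((N : ℝ) / (4 * t)) ^ ((t : ℝ) / 2) ≤ U.card := by
  rcases le_or_gt N (4*t) with hsmall | hbig
  · -- trivial case : one set suffices
    have htN' : t ≤ (Finset.univ : Finset (Fin N)).card := by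
      rw [Finset.card_univ, Fintype.card_fin]; omega
    obtain ⟨I₀, _, hI₀card⟩ := Finset.exists_subset_card_eq htN'
    refine ⟨{I₀}, ?_, ?_, ?_⟩
    · intro I hI
      rw [Finset.mem_singleton] at hI
      rw [hI, hI₀card]
    · intro I hI J hJ hne
      rw [Finset.mem_singleton] at hI hJ
      exact absurd (hI.trans hJ.symm) hne
    · rw [Finset.card_singleton]
      push_cast
      apply Real.rpow_le_one (by positivity) _ (by positivity)
      rw [div_le_one (by positivity)]
      exact_mod_cast hsmall
  · -- main case
    set s := (t+1)/2 with hs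
    obtain ⟨U, hUcard, hUpair, hUcount⟩ :=
      aux_family N t s ht (le_of_lt htN) (by omega) (by omega)
    refine ⟨U, hUcard, ?_, ?_⟩
    · intro I hI J hJ hne
      have := hUpair I hI J hJ hne
      rw [lt_div_iff₀ (by norm_num : (0:ℝ) < 2)]
      exact_mod_cast (by omega : 2*(I ∩ J).card < t → (I ∩ J).card * 2 < t) this
    · have hnum := aux_numeric N t s ht hs (by omega)
      have hcountR : (N.choose s : ℝ) ≤ (U.card : ℝ) * ((t.choose s : ℝ))^2 := by
        exact_mod_cast hUcount
      have hpos : (0:ℝ) < ((t.choose s : ℝ))^2 := by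
        have : 0 < t.choose s := Nat.choose_pos (by omega)
        positivity
    
      have := le_trans hnum hcountR
      calc ((N : ℝ) / (4 * t)) ^ ((t : ℝ) / 2)
          = ((N : ℝ) / (4 * t)) ^ ((t : ℝ) / 2) * ((t.choose s : ℝ))^2 / ((t.choose s : ℝ))^2 := by
            rw [mul_div_cancel_right₀ _ (ne_of_gt hpos)]
        _ ≤ (U.card : ℝ) * ((t.choose s : ℝ))^2 / ((t.choose s : ℝ))^2 :=
            (div_le_div_iff_of_pos_right hpos).mpr this
        _ = (U.card : ℝ) := by rw [mul_div_cancel_right₀ _ (ne_of_gt hpos)]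
end
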